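/- arXiv:1105.2404 — 4 statements merged into one kernel-verified Lean document; each statement's English description precedes it below -/
import Mathlib

section
/- If G is a graph of order n and size m (number of edges) with δ(G) ≥ k ≥ 2, then γ_{×k,t}(G_I) ≥ max{ nk, ⌈2km/Δ(G)⌉ }, where Δ(G) is the maximum degree of G. -/
open SimpleGraph Finset

/-- The inflated graph `G_I` of a graph `G`: its vertices are the darts (oriented edges) of
`G`; the darts with first coordinate `x` form the clique `X_x` (of size `deg x`), and each
edge `xy` of `G` gives the "blue" edge between the dart `(x,y)` and its reverse `(y,x)`;
these blue edges form a perfect matching.  Equivalently, `inflation G` is the line graph of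
the subdivision of `G`. -/
def inflation {V : Type*} (G : SimpleGraph V) : SimpleGraph G.Dart :=
  SimpleGraph.fromRel (fun d₁ d₂ => d₁.toProd.1 = d₂.toProd.1 ∨ d₁.toProd = d₂.toProd.swap)

/-- `S` is a `k`-tuple total dominating set of `H`: every vertex has at least `k`
neighbours in `S`. -/
def IsKTDS {W : Type*} (H : SimpleGraph W) (k : ℕ) (S : Set W) : Prop :=
  ∀ v : W, k ≤ (S ∩ H.neighborSet v).ncard

/-- The `k`-tuple total domination number of `H`: the minimum cardinality of a `k`-tuple
total dominating set. -/
noncomputable def ktdn {W : Type*} (H : SimpleGraph W) (k : ℕ) : ℕ :=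
  sInf {n | ∃ S : Set W, IsKTDS H k S ∧ S.ncard = n}

/-- `H` is a 2-factor of `G`: a spanning 2-regular subgraph of `G`, i.e. a vertex-disjoint
union of cycles covering all vertices. -/
def IsTwoFactor {V : Type*} (G H : SimpleGraph V) : Prop :=
  H ≤ G ∧ ∀ v : V, (H.neighborSet v).ncard = 2

/-- `G` is a `k`-Hamiltonian-like decomposable graph (kHLD-graph): `G` contains `k`
pairwise edge-disjoint 2-factors. -/
def IsKHLD {V : Type*} (G : SimpleGraph V) (k : ℕ) : Prop :=
  ∃ F : Fin k → SimpleGraph V, (∀ i, IsTwoFactor G (F i)) ∧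
    ∀ i j, i ≠ j → Disjoint (F i) (F j)

/-- `M` is a perfect matching of `G`, viewed as a 1-regular spanning subgraph. -/
def IsPerfectMatchingGraph {V : Type*} (G M : SimpleGraph V) : Prop :=
  M ≤ G ∧ ∀ v : V, (M.neighborSet v).ncard = 1

/-- `M` is a matching of `G`: a subgraph of maximum degree at most 1. -/
def IsMatchingGraph {V : Type*} (G M : SimpleGraph V) : Prop :=
  M ≤ G ∧ ∀ v : V, (M.neighborSet v).ncard ≤ 1

/-- `G` is a kHLPM-graph: `G` contains `k` pairwise edge-disjoint 2-factors together with
a perfect matching edge-disjoint from each of these 2-factors. -/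
def IsKHLPM {V : Type*} (G : SimpleGraph V) (k : ℕ) : Prop :=
  ∃ (F : Fin k → SimpleGraph V) (M : SimpleGraph V),
    (∀ i, IsTwoFactor G (F i)) ∧ (∀ i j, i ≠ j → Disjoint (F i) (F j)) ∧
    IsPerfectMatchingGraph G M ∧ ∀ i, Disjoint M (F i)

/-- `G` is a kHLMM-graph: `G` contains `k` pairwise edge-disjoint 2-factors together with
a matching of size `⌊n/2⌋` edge-disjoint from each of these 2-factors. -/
def IsKHLMM {V : Type*} [Fintype V] (G : SimpleGraph V) (k : ℕ) : Prop :=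
  ∃ (F : Fin k → SimpleGraph V) (M : SimpleGraph V),
    (∀ i, IsTwoFactor G (F i)) ∧ (∀ i j, i ≠ j → Disjoint (F i) (F j)) ∧
    IsMatchingGraph G M ∧ M.edgeSet.ncard = Fintype.card V / 2 ∧ ∀ i, Disjoint M (F i)

/-- The graph `F` on `V ⊕ W` obtained from the disjoint union of `G` (on `V`) and `H`
(on `W`) by adding the single edge between `x : V` and `y : W`.  When `G` and `H` are
connected, this added edge is a cut-edge of `F` whose removal leaves exactly the two
components `G` and `H`. -/
def joinByEdge {V W : Type*} (G : SimpleGraph V) (H : SimpleGraph W) (x : V) (y : W) :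
    SimpleGraph (V ⊕ W) :=
  SimpleGraph.fromRel (fun a b =>
    match a, b with
    | Sum.inl u, Sum.inl v => G.Adj u v
    | Sum.inr u, Sum.inr v => H.Adj u v
    | Sum.inl u, Sum.inr v => u = x ∧ v = y
    | Sum.inr _, Sum.inl _ => False)

/-- The generalized Petersen graph `P(n,m)`: vertices `a_i` (the left copies) and `b_i`
(the right copies) for `i ∈ ZMod n`, with edges `a_i a_{i+1}`, `a_i b_i`, `b_i b_{i+m}`. -/
def genPetersen (n m : ℕ) : SimpleGraph (ZMod n ⊕ ZMod n) :=
  SimpleGraph.fromRel (fun a b =>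
    match a, b with
    | Sum.inl i, Sum.inl j => j = i + 1
    | Sum.inl i, Sum.inr j => j = i
    | Sum.inr i, Sum.inr j => j = i + (m : ZMod n)
    | Sum.inr _, Sum.inl _ => False)

/-- Cyclic distance between `i` and `j` on the cycle `ZMod n`. -/
def cycDist (n : ℕ) (i j : ZMod n) : ℕ := min (i - j).val (j - i).val

/-- The Harary graph `H_{m,n}` on `ZMod n`: each vertex is adjacent to the nearest `m/2`
vertices in each direction around the circle; if `m` is odd and `n` is even, each vertex
is also adjacent to the diametrically opposite vertex; if `m` and `n` are both odd, the
edges `(i, i + (n-1)/2)` for `0 ≤ i ≤ (n-1)/2` are added instead. -/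
def harary (m n : ℕ) : SimpleGraph (ZMod n) :=
  SimpleGraph.fromRel (fun i j =>
    (1 ≤ cycDist n i j ∧ cycDist n i j ≤ m / 2) ∨
    (m % 2 = 1 ∧ n % 2 = 0 ∧ j = i + ((n / 2 : ℕ) : ZMod n)) ∨
    (m % 2 = 1 ∧ n % 2 = 1 ∧ (∃ t : ℕ, t ≤ (n - 1) / 2 ∧ i = (t : ZMod n)) ∧
      j = i + (((n - 1) / 2 : ℕ) : ZMod n)))

/-- The graph obtained by gluing the graphs `G i` (on vertex types `V i`) at the
distinguished vertices `x i`, which are all identified to the single vertex `none`.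
The `v`-components of the resulting graph at the cut-vertex `v = none` are exactly
(canonical copies of) the graphs `G i`. -/
def wedgeAt {m : ℕ} {V : Fin m → Type*} (G : ∀ i, SimpleGraph (V i)) (x : ∀ i, V i) :
    SimpleGraph (Option (Σ i : Fin m, {u : V i // u ≠ x i})) :=
  SimpleGraph.fromRel (fun a b =>
    match a, b with
    | none, some ⟨i, u⟩ => (G i).Adj (x i) u.val
    | some ⟨i, u⟩, some ⟨j, w⟩ => ∃ h : i = j, (G j).Adj (cast (congrArg V h) u.val) w.val
    | _, _ => False)

section aux
open Finset
variable {V : Type*} [Fintype V] [DecidableEq V] {G : SimpleGraph V} [DecidableRel G.Adj]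

lemma dart_symm_ne (d : G.Dart) : d.symm ≠ d := by
  intro h
  have := congrArg (fun e : G.Dart => e.toProd.1) h
  simp only [Dart.symm_toProd, Prod.fst_swap] at this
  exact d.snd_ne_fst this

lemma inflation_adj {d e : G.Dart} :
    (inflation G).Adj d e ↔ d ≠ e ∧ (d.toProd.1 = e.toProd.1 ∨ e = d.symm) := by
  have h1 : d.toProd = e.toProd.swap ↔ e = d.symm := by
    rw [Dart.ext_iff, Dart.symm_toProd]
    constructor
    · intro h; rw [h, Prod.swap_swap]
    · intro h; rw [h, Prod.swap_swap]
  have h2 : e.toProd = d.toProd.swap ↔ e = d.symm := by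
    rw [Dart.ext_iff, Dart.symm_toProd]
  constructor
  · rintro ⟨hne, (h | h) | (h | h)⟩
    · exact ⟨hne, Or.inl h⟩
    · exact ⟨hne, Or.inr (h1.mp h)⟩
    · exact ⟨hne, Or.inl h.symm⟩
    · exact ⟨hne, Or.inr (h2.mp h)⟩
  · rintro ⟨hne, h | h⟩
    · exact ⟨hne, Or.inl (Or.inl h)⟩
    · exact ⟨hne, Or.inr (Or.inr (h2.mpr h))⟩

def Nfin (G : SimpleGraph V) [DecidableRel G.Adj] (d : G.Dart) : Finset G.Dart :=
  insert d.symm ((Finset.univ.filter fun e : G.Dart => e.toProd.1 = d.toProd.1).erase d)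

lemma mem_Nfin {d e : G.Dart} : e ∈ Nfin G d ↔ (inflation G).Adj d e := by
  rw [inflation_adj]
  simp only [Nfin, mem_insert, mem_erase, mem_filter, mem_univ, true_and]
  constructor
  · rintro (h | ⟨hne, hf⟩)
    · exact ⟨fun hh => dart_symm_ne d (h ▸ hh.symm), Or.inr h⟩
    · exact ⟨fun hh => hne hh.symm, Or.inl hf.symm⟩
  · rintro ⟨hne, h | h⟩
    · exact Or.inr ⟨fun hh => hne hh.symm, h.symm⟩
    · exact Or.inl h

lemma card_Nfin (d : G.Dart) : (Nfin G d).card = G.degree d.toProd.1 := by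
  have hdmem : d ∈ Finset.univ.filter fun e : G.Dart => e.toProd.1 = d.toProd.1 := by
    simp
  have hsymm : d.symm ∉ (Finset.univ.filter fun e : G.Dart => e.toProd.1 = d.toProd.1).erase d := by
    simp only [mem_erase, mem_filter, mem_univ, true_and, Dart.symm_toProd, Prod.fst_swap]
    rintro ⟨-, h⟩
    exact d.snd_ne_fst h
  rw [Nfin, card_insert_of_notMem hsymm, card_erase_of_mem hdmem,
    G.dart_fst_fiber_card_eq_degree d.toProd.1]
  have hpos : 0 < G.degree d.toProd.1 := by
    rw [← card_neighborFinset_eq_degree]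
    exact card_pos.mpr ⟨d.toProd.2, by simp [mem_neighborFinset, d.adj]⟩
  omega

lemma inter_nbhd_ncard (S : Set G.Dart) (d : G.Dart) :
    (S ∩ (inflation G).neighborSet d).ncard = (S.toFinite.toFinset ∩ Nfin G d).card := by
  rw [← Set.ncard_coe_finset]
  congr 1
  ext e
  simp [Set.Finite.mem_toFinset, mem_Nfin, SimpleGraph.mem_neighborSet]

end aux

/-- **Corollary (lower bound with max degree).** If `G` has order `n`, size `m` and
`δ(G) ≥ k ≥ 2`, then `γ_{×k,t}(G_I) ≥ max {nk, ⌈2km/Δ(G)⌉}`. -/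
theorem stmt1 {V : Type*} [Fintype V] [DecidableEq V] (G : SimpleGraph V)
    [DecidableRel G.Adj] (n m k : ℕ) (hn : Fintype.card V = n)
    (hm : G.edgeFinset.card = m) (hk : 2 ≤ k) (hδ : k ≤ G.minDegree) :
    max (n * k) ((2 * k * m + G.maxDegree - 1) / G.maxDegree) ≤ ktdn (inflation G) k := by
  classical
  have hV : Nonempty V := by
    by_contra h
    rw [not_nonempty_iff] at h
    have h0 : G.minDegree = 0 := by
      simp [SimpleGraph.minDegree, Finset.univ_eq_empty]
    omega
  obtain ⟨v0⟩ := hV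
  have hΔk : k ≤ G.maxDegree :=
    le_trans hδ (le_trans (G.minDegree_le_degree v0) (G.degree_le_maxDegree v0))
  have key : ∀ S : Set G.Dart, IsKTDS (inflation G) k S →
      max (n * k) ((2 * k * m + G.maxDegree - 1) / G.maxDegree) ≤ S.ncard := by
    intro S hS
    set T := S.toFinite.toFinset with hT
    have hScard : S.ncard = T.card := Set.ncard_eq_toFinset_card S S.toFinite
    have hSd : ∀ d, k ≤ (T ∩ Nfin G d).card := fun d => by
      rw [← inter_nbhd_ncard]; exact hS d
    have claimA : ∀ x : V, k ≤ (T.filter fun e => e.toProd.1 = x).card := by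
      intro x
      by_contra hlt
      push_neg at hlt
      have hdegx : 0 < G.degree x :=
        lt_of_lt_of_le (by omega) (le_trans hδ (G.minDegree_le_degree x))
      obtain ⟨y, hxy⟩ := G.degree_pos_iff_exists_adj x |>.mp hdegx
      rcases (T.filter fun e => e.toProd.1 = x).eq_empty_or_nonempty with hSx | ⟨d, hd⟩
      · set d : G.Dart := ⟨(x, y), hxy⟩ with hdd
        have hsub : T ∩ Nfin G d ⊆ {d.symm} := by
          intro e he
          rw [mem_inter] at he
          rcases mem_insert.mp he.2 with h | h
          · simpa using h
          · exfalso
            rw [mem_erase, mem_filter] at h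
            have : e ∈ T.filter fun e => e.toProd.1 = x :=
              mem_filter.mpr ⟨he.1, h.2.2⟩
            simp [hSx] at this
        have hle := le_trans (hSd d) (card_le_card hsub)
        simp only [card_singleton] at hle
        omega
      · have hsub : T ∩ Nfin G d ⊆
            insert d.symm ((T.filter fun e => e.toProd.1 = x).erase d) := by
          intro e he
          rw [mem_inter] at he
          rcases mem_insert.mp he.2 with h | h
          · exact mem_insert.mpr (Or.inl h)
          · rw [mem_erase, mem_filter] at h
            refine mem_insert.mpr (Or.inr (mem_erase.mpr ⟨h.1, mem_filter.mpr ⟨he.1, ?_⟩⟩))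
            rw [h.2.2, (mem_filter.mp hd).2]
        have hb := le_trans (hSd d) (card_le_card hsub)
        have h1 : ((T.filter fun e => e.toProd.1 = x).erase d).card
            = (T.filter fun e => e.toProd.1 = x).card - 1 := card_erase_of_mem hd
        have h2 := card_insert_le d.symm ((T.filter fun e => e.toProd.1 = x).erase d)
        have h3 : 0 < (T.filter fun e => e.toProd.1 = x).card := card_pos.mpr ⟨d, hd⟩
        omega
    have hcardT : T.card = ∑ x : V, (T.filter fun e => e.toProd.1 = x).card :=
      card_eq_sum_card_fiberwise (fun e _ => mem_univ _)
    have hnk : n * k ≤ T.card := by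
      rw [hcardT]
      calc n * k = ∑ _x : V, k := by rw [Finset.sum_const, card_univ, hn, smul_eq_mul]
        _ ≤ _ := Finset.sum_le_sum fun x _ => claimA x
    have hdouble : 2 * m * k ≤ T.card * G.maxDegree := by
      calc 2 * m * k = (Fintype.card G.Dart) * k := by
            rw [G.dart_card_eq_twice_card_edges, hm]
        _ = ∑ _d : G.Dart, k := by rw [Finset.sum_const, card_univ, smul_eq_mul]
        _ ≤ ∑ d : G.Dart, (T ∩ Nfin G d).card := Finset.sum_le_sum fun d _ => hSd d
        _ = ∑ d : G.Dart, ∑ s ∈ T, (if s ∈ Nfin G d then 1 else 0) := by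
            refine Finset.sum_congr rfl fun d _ => ?_
            rw [← Finset.card_filter, Finset.filter_mem_eq_inter]
        _ = ∑ s ∈ T, ∑ d : G.Dart, (if s ∈ Nfin G d then 1 else 0) := Finset.sum_comm
        _ = ∑ s ∈ T, (Finset.univ.filter fun d => s ∈ Nfin G d).card := by
            refine Finset.sum_congr rfl fun s _ => ?_
            rw [Finset.card_filter]
        _ = ∑ s ∈ T, G.degree s.toProd.1 := by
            refine Finset.sum_congr rfl fun s _ => ?_
            rw [← card_Nfin s]
            congr 1
            ext d
            simp only [mem_filter, mem_univ, true_and, mem_Nfin]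
            exact ⟨fun h => h.symm, fun h => h.symm⟩
        _ ≤ ∑ _s ∈ T, G.maxDegree := Finset.sum_le_sum fun s _ => G.degree_le_maxDegree _
        _ = T.card * G.maxDegree := by rw [Finset.sum_const, smul_eq_mul]
    have hΔpos : 0 < G.maxDegree := by omega
    have hceil : (2 * k * m + G.maxDegree - 1) / G.maxDegree ≤ T.card := by
      rw [Nat.div_le_iff_le_mul_add_pred hΔpos]
      have hcomm : G.maxDegree * T.card = T.card * G.maxDegree := mul_comm _ _
      have hmk : 2 * k * m = 2 * m * k := by ring
      omega
    rw [hScard]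
    exact max_le hnk hceil
  unfold ktdn
  refine le_csInf ⟨(Set.univ : Set G.Dart).ncard, Set.univ, ?_, rfl⟩ ?_
  · intro d
    have hEq : (inflation G).neighborSet d = ↑(Nfin G d) := by
      ext e; simp [mem_Nfin, SimpleGraph.mem_neighborSet]
    rw [Set.univ_inter, hEq, Set.ncard_coe_finset, card_Nfin]
    exact le_trans hδ (G.minDegree_le_degree _)
  · rintro b ⟨S, hS, rfl⟩
    exact key S hS
end

section
/- Let G be a graph of order n and let k ≥ 1 be an integer with 2k ≤ δ(G). Then γ_{×2k,t}(G_I) = 2kn if and only if G is a kHLD-graph (i.e., G contains k pairwise edge-disjoint 2-factors). -/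
open SimpleGraph

/-!
A dart `(x, y)` of `G` is adjacent in `G_I` to the other darts at `x` and to its reverse `(y, x)`.
Hence a `2k`-tuple total dominating set `S` contains at least `2k` darts at every vertex: one dart
at `x` in `S` already forces this, and if there is none, the darts at `x` have at most one
neighbour in `S`. So `|S| ≥ 2kn`, and in case of equality `S` has exactly `2k` darts at every
vertex and is closed under reversal, i.e. it is the dart set of a `2k`-regular spanning subgraph
of `G`. Conversely the darts of `k` edge-disjoint 2-factors form a `2k`-tuple total dominating set
of size `2kn`.

What remains is Petersen's theorem that a `2k`-regular graph contains `k` edge-disjoint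
2-factors. Hall's theorem orients it with all out- and in-degrees equal to `k`; the relation
"`u` is an out-neighbour of `v`" is then `k`-regular, so Hall's theorem again splits it into `k`
permutations `f_i` with every `v → f_i v` an arc, and the edges `{v, f_i v}` form the `i`-th
2-factor.
-/

open Finset Function

section Hall

theorem exists_injective_mem_of_card_le {α β : Type*} [Fintype α] [DecidableEq β] {k : ℕ}
    (hk : 0 < k) (r : α → Finset β) (hout : ∀ a, k ≤ #(r a))
    (hin : ∀ b, #{a | b ∈ r a} ≤ k) :
    ∃ f : α → β, Injective f ∧ ∀ a, f a ∈ r a := by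
  refine (all_card_le_biUnion_card_iff_exists_injective r).1 fun s => ?_
  refine Nat.le_of_mul_le_mul_right (card_mul_le_card_mul (fun a b => b ∈ r a) ?_ ?_) hk
  · intro a ha
    rw [bipartiteAbove, filter_mem_eq_inter, inter_eq_right.2 (subset_biUnion_of_mem r ha)]
    exact hout a
  · intro b _
    exact (card_le_card (monotone_filter_left _ (subset_univ s))).trans (hin b)

theorem exists_injective_family_mem_of_card_eq {V : Type*} [Fintype V] [DecidableEq V] (k : ℕ)
    (r : V → Finset V) (hout : ∀ v, #(r v) = k) (hin : ∀ u, #{v | u ∈ r v} = k) :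
    ∃ f : Fin k → V → V, (∀ i, Injective (f i)) ∧ (∀ i v, f i v ∈ r v) ∧
      ∀ v, Injective (f · v) := by
  induction k generalizing r with
  | zero => exact ⟨finZeroElim, finZeroElim, finZeroElim, fun _ => injective_of_subsingleton _⟩
  | succ k ih =>
    obtain ⟨f₀, hf₀, hf₀r⟩ :=
      exists_injective_mem_of_card_le k.succ_pos r (fun v => (hout v).ge) fun u => (hin u).le
    have hin' : ∀ u, #{v | u ∈ (r v).erase (f₀ v)} = k := by
      intro u
      obtain ⟨w, rfl⟩ := Finite.surjective_of_injective hf₀ u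
      have : ({v | f₀ w ∈ (r v).erase (f₀ v)} : Finset V) =
          ({v | f₀ w ∈ r v} : Finset V).erase w := by
        ext v
        simp only [mem_erase, mem_filter, mem_univ, true_and, ne_eq, hf₀.eq_iff]
        tauto
      rw [this, card_erase_of_mem (by simpa using hf₀r w), hin]
      rfl
    obtain ⟨f, hf, hfr, hfv⟩ := ih (fun v => (r v).erase (f₀ v))
      (fun v => by rw [card_erase_of_mem (hf₀r v), hout]; rfl) hin'
    refine ⟨Fin.cons f₀ f, Fin.cases hf₀ hf, Fin.cases hf₀r fun i v => mem_of_mem_erase (hfr i v),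
      fun v => ?_⟩
    have : (fun i => (Fin.cons f₀ f : Fin (k + 1) → V → V) i v) = Fin.cons (f₀ v) (f · v) := by
      funext i; exact Fin.cases rfl (fun _ => rfl) i
    rw [this, Fin.cons_injective_iff]
    exact ⟨fun ⟨i, hi⟩ => ne_of_mem_erase (hfr i v) hi, hfv v⟩

end Hall

namespace SimpleGraph

variable {V : Type*} {H : SimpleGraph V}

structure IsOrientation (H : SimpleGraph V) (out : V → Finset V) : Prop where
  adj_of_mem {v u : V} : u ∈ out v → H.Adj v u
  not_mem_of_mem {v u : V} : u ∈ out v → v ∉ out u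
  mem_or_mem {v u : V} : H.Adj v u → u ∈ out v ∨ v ∈ out u

variable [Fintype V] [DecidableEq V] [DecidableRel H.Adj]

theorem IsOrientation.card_out_add_card_in {out : V → Finset V} (ho : H.IsOrientation out)
    (u : V) : #(out u) + #{v | u ∈ out v} = H.degree u := by
  rw [← card_neighborFinset_eq_degree, ← card_union_of_disjoint]
  · congr 1
    ext v
    simp only [mem_union, mem_filter, mem_univ, true_and, mem_neighborFinset]
    exact ⟨fun h => h.elim ho.adj_of_mem fun h => (ho.adj_of_mem h).symm, ho.mem_or_mem⟩
  · exact Finset.disjoint_left.2 fun v hv hv' => ho.not_mem_of_mem hv (mem_filter.1 hv').2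

theorem sum_degree_le_two_mul_card_biUnion_incidenceFinset (W : Finset V) :
    ∑ v ∈ W, H.degree v ≤ 2 * #(W.biUnion (H.incidenceFinset ·)) := by
  set B := W.biUnion (H.incidenceFinset ·)
  calc ∑ v ∈ W, H.degree v = ∑ v ∈ W, #(B.bipartiteAbove (fun v e => v ∈ e) v) := by
        refine sum_congr rfl fun v hv => ?_
        rw [bipartiteAbove, ← card_incidenceFinset_eq_degree]
        congr 1
        ext e
        simp only [mem_filter, B, mem_biUnion, mem_incidenceFinset]
        exact ⟨fun h => ⟨⟨v, hv, h⟩, h.2⟩, fun ⟨⟨_, _, h⟩, hv⟩ => ⟨h.1, hv⟩⟩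
    _ = ∑ e ∈ B, #(W.bipartiteBelow (fun v e => v ∈ e) e) :=
        sum_card_bipartiteAbove_eq_sum_card_bipartiteBelow _
    _ ≤ ∑ _e ∈ B, 2 := sum_le_sum fun e _ => by
        calc #(W.bipartiteBelow (fun v e => v ∈ e) e) ≤ #e.toFinset :=
              card_le_card fun v hv => Sym2.mem_toFinset.2 (mem_filter.1 hv).2
          _ ≤ 2 := by rw [Sym2.card_toFinset]; split_ifs <;> omega
    _ = 2 * #B := by rw [sum_const, smul_eq_mul, mul_comm]

theorem exists_injective_mem_incidenceFinset :
    ∃ f : (Σ v : V, Fin (H.degree v / 2)) → Sym2 V,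
      Injective f ∧ ∀ p, f p ∈ H.incidenceFinset p.1 := by
  refine (all_card_le_biUnion_card_iff_exists_injective _).1 fun A => ?_
  set W := A.image Sigma.fst
  have hW : A.biUnion (fun p => H.incidenceFinset p.1) = W.biUnion (H.incidenceFinset ·) := by
    ext e
    simp only [mem_biUnion, mem_image, W]
    exact ⟨fun ⟨p, hp, he⟩ => ⟨p.1, ⟨p, hp, rfl⟩, he⟩, fun ⟨_, ⟨p, hp, rfl⟩, he⟩ => ⟨p, hp, he⟩⟩
  have hdeg := sum_degree_le_two_mul_card_biUnion_incidenceFinset (H := H) W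
  have hhalf : 2 * ∑ v ∈ W, H.degree v / 2 ≤ ∑ v ∈ W, H.degree v := by
    rw [mul_sum]
    exact sum_le_sum fun v _ => Nat.mul_div_le _ _
  calc #A ≤ #(W.sigma fun _ => univ) :=
        card_le_card fun p hp => mem_sigma.2 ⟨mem_image_of_mem _ hp, mem_univ _⟩
    _ = ∑ v ∈ W, H.degree v / 2 := by simp [card_sigma]
    _ ≤ #(W.biUnion (H.incidenceFinset ·)) := by omega
    _ = _ := by rw [hW]

theorem image_eq_edgeFinset_of_even (hH : ∀ v, Even (H.degree v))
    {f : (Σ v : V, Fin (H.degree v / 2)) → Sym2 V} (hf : Injective f)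
    (hfe : ∀ p, f p ∈ H.incidenceFinset p.1) : univ.image f = H.edgeFinset := by
  refine eq_of_subset_of_card_le (fun e he => ?_) ?_
  · obtain ⟨p, -, rfl⟩ := mem_image.1 he
    exact mem_edgeFinset.2 ((mem_incidenceFinset _ _ _).1 (hfe p)).1
  · have := H.sum_degrees_eq_twice_card_edges
    rw [← sum_congr rfl fun v _ => Nat.two_mul_div_two_of_even (hH v), ← mul_sum] at this
    rw [card_image_of_injective _ hf, card_univ, Fintype.card_sigma]
    simp only [Fintype.card_fin]
    omega

theorem exists_isOrientation_two_mul_card_out_eq (hH : ∀ v, Even (H.degree v)) :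
    ∃ out : V → Finset V, H.IsOrientation out ∧ ∀ v, 2 * #(out v) = H.degree v := by
  -- Vertex `v` owns `deg v / 2` tokens, each sent to its own edge at `v`; as there are as many
  -- tokens as edges, every edge receives one, and its tail is the owner of that token.
  obtain ⟨f, hf, hfe⟩ := H.exists_injective_mem_incidenceFinset
  have hf_edge (p : Σ v : V, Fin (H.degree v / 2)) : f p ∈ H.edgeSet ∧ p.1 ∈ f p :=
    (mem_incidenceFinset _ _ _).1 (hfe p)
  have hsurj : ∀ e ∈ H.edgeSet, ∃ p, f p = e := fun e he => by
    rw [← mem_edgeFinset, ← image_eq_edgeFinset_of_even hH hf hfe] at he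
    simpa using he
  let out : V → Finset V := fun v => {u | ∃ j, f ⟨v, j⟩ = s(v, u)}
  refine ⟨out, ⟨?_, ?_, ?_⟩, fun v => ?_⟩
  · intro v u hu
    obtain ⟨j, hj⟩ := (mem_filter.1 hu).2
    simpa [hj] using (hf_edge ⟨v, j⟩).1
  · intro v u hu hv
    obtain ⟨j, hj⟩ := (mem_filter.1 hu).2
    obtain ⟨j', hj'⟩ := (mem_filter.1 hv).2
    have hadj : H.Adj v u := by simpa [hj] using (hf_edge ⟨v, j⟩).1
    exact hadj.ne (Sigma.mk.inj_iff.1 (hf (hj.trans (Sym2.eq_swap.trans hj'.symm)))).1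
  · intro v u hadj
    obtain ⟨⟨w, j⟩, hp⟩ := hsurj s(v, u) hadj
    have hw := (hf_edge ⟨w, j⟩).2
    rw [hp, Sym2.mem_iff] at hw
    rcases hw with rfl | rfl
    · exact Or.inl (mem_filter.2 ⟨mem_univ _, j, hp⟩)
    · exact Or.inr (mem_filter.2 ⟨mem_univ _, j, hp.trans Sym2.eq_swap⟩)
  · have hout : (out v).image (s(v, ·)) = univ.image fun j => f ⟨v, j⟩ := by
      ext e
      simp only [mem_image, mem_filter, mem_univ, true_and, out]
      constructor
      · rintro ⟨u, ⟨j, hj⟩, rfl⟩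
        exact ⟨j, hj⟩
      · rintro ⟨j, rfl⟩
        obtain ⟨u, hu⟩ := Sym2.mem_iff_exists.1 (hf_edge ⟨v, j⟩).2
        exact ⟨u, ⟨j, hu⟩, hu.symm⟩
    rw [← card_image_of_injective _ (fun _ _ => Sym2.congr_right.1), hout,
      card_image_of_injective _ fun _ _ h => sigma_mk_injective (hf h), card_univ,
      Fintype.card_fin, Nat.two_mul_div_two_of_even (hH v)]

end SimpleGraph

section Petersen

variable {V : Type*} {G : SimpleGraph V}

theorem isTwoFactor_fromRel [Finite V] {f : V → V} (hf : Injective f)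
    (hadj : ∀ v, G.Adj v (f v)) (hff : ∀ v, f (f v) ≠ v) :
    IsTwoFactor G (fromRel fun a b => b = f a) := by
  refine ⟨fun a b ⟨_, h⟩ => ?_, fun a => ?_⟩
  · rcases h with rfl | rfl
    exacts [hadj a, (hadj b).symm]
  · obtain ⟨b, rfl⟩ := Finite.surjective_of_injective hf a
    have : (fromRel fun a b => b = f a).neighborSet (f b) = {f (f b), b} := by
      ext u
      simp only [mem_neighborSet, fromRel_adj, hf.eq_iff, Set.mem_insert_iff,
        Set.mem_singleton_iff]
      constructor
      · rintro ⟨-, h | h⟩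
        exacts [Or.inl h, Or.inr h.symm]
      · rintro (rfl | rfl)
        exacts [⟨(hadj (f b)).ne, Or.inl rfl⟩, ⟨(hadj u).ne', Or.inr rfl⟩]
    rw [this, Set.ncard_pair (hff b)]

theorem disjoint_fromRel {f g : V → V} (hfg : ∀ v, f v ≠ g v) (hgf : ∀ v, g (f v) ≠ v) :
    Disjoint (fromRel fun a b => b = f a) (fromRel fun a b => b = g a) := by
  refine disjoint_left.2 fun a b ⟨_, hf⟩ ⟨_, hg⟩ => ?_
  rcases hf with rfl | rfl <;> rcases hg with h | h
  exacts [hfg a h, hgf a h.symm, hgf b h.symm, hfg b h]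

theorem ncard_neighborSet_eq_degree [Fintype V] [DecidableRel G.Adj] (v : V) :
    (G.neighborSet v).ncard = G.degree v := by
  rw [← card_neighborSet_eq_degree, Set.ncard_eq_toFinset_card', Set.toFinset_card]

theorem isKHLD_of_le_of_ncard_neighborSet_eq [Fintype V] {H : SimpleGraph V} (hHG : H ≤ G)
    {k : ℕ} (hH : ∀ v, (H.neighborSet v).ncard = 2 * k) : IsKHLD G k := by
  classical
  have hdeg (v : V) : H.degree v = 2 * k := by rw [← ncard_neighborSet_eq_degree, hH]
  obtain ⟨out, ho, hout⟩ :=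
    H.exists_isOrientation_two_mul_card_out_eq fun v => hdeg v ▸ even_two_mul k
  have hout' (v : V) : #(out v) = k := by have := hout v; have := hdeg v; omega
  have hin (u : V) : #{v | u ∈ out v} = k := by
    have := ho.card_out_add_card_in u
    have := hdeg u
    have := hout' u
    omega
  obtain ⟨f, hf, hfo, hfv⟩ := exists_injective_family_mem_of_card_eq k out hout' hin
  have hback (i j : Fin k) (v : V) : f i (f j v) ≠ v := fun h => by
    have := hfo i (f j v)
    rw [h] at this
    exact ho.not_mem_of_mem (hfo j v) this
  exact ⟨fun i => fromRel fun a b => b = f i a,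
    fun i => isTwoFactor_fromRel (hf i) (fun v => hHG (ho.adj_of_mem (hfo i v))) (hback i i),
    fun i j hij => disjoint_fromRel (fun v => (hfv v).ne hij) (hback j i)⟩

end Petersen

open scoped Classical in
theorem Set.ncard_inter_insert_of_notMem {α : Type*} [Finite α] {S T : Set α} {a : α}
    (ha : a ∉ T) : (S ∩ insert a T).ncard = (S ∩ T).ncard + if a ∈ S then 1 else 0 := by
  split_ifs with h
  · rw [Set.inter_insert_of_mem h, Set.ncard_insert_of_notMem fun h' => ha h'.2]
  · rw [Set.inter_insert_of_notMem h, add_zero]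

section Inflation

variable {V : Type*} {G H : SimpleGraph V}

theorem insert_neighborSet_inflation (d : G.Dart) :
    insert d ((inflation G).neighborSet d) = insert d.symm {e | e.fst = d.fst} := by
  ext e
  by_cases h : e = d
  · simp [h]
  · simp only [inflation, Set.mem_insert_iff, h, false_or, mem_neighborSet, fromRel_adj,
      Ne.symm h, ne_eq, not_false_eq_true, true_and, Dart.ext_iff, Dart.symm_toProd]
    grind

def dartsIn (G H : SimpleGraph V) : Set G.Dart := {d | H.Adj d.fst d.snd}

theorem ncard_dartsIn_inter_fiber (hHG : H ≤ G) (x : V) :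
    (dartsIn G H ∩ {e | e.fst = x}).ncard = (H.neighborSet x).ncard := by
  rw [← Set.InjOn.ncard_image (f := fun e : G.Dart => e.snd) fun e he e' he' h =>
    Dart.ext _ _ (Prod.ext (he.2.trans he'.2.symm) h)]
  congr 1
  ext u
  simp only [dartsIn, Set.mem_image, Set.mem_inter_iff, mem_neighborSet]
  constructor
  · rintro ⟨e, ⟨he, rfl⟩, rfl⟩
    exact he
  · intro h
    exact ⟨⟨(x, u), hHG h⟩, ⟨h, rfl⟩, rfl⟩

variable [Fintype V] [DecidableRel G.Adj]

open scoped Classical in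
theorem ncard_inter_neighborSet_inflation_add (S : Set G.Dart) (d : G.Dart) :
    (S ∩ (inflation G).neighborSet d).ncard + (if d ∈ S then 1 else 0) =
      (S ∩ {e | e.fst = d.fst}).ncard + if d.symm ∈ S then 1 else 0 := by
  rw [← Set.ncard_inter_insert_of_notMem (notMem_neighborSet_self _),
    insert_neighborSet_inflation, Set.ncard_inter_insert_of_notMem (a := d.symm) d.adj.ne']

theorem ncard_eq_sum_ncard_inter_fiber (S : Set G.Dart) :
    S.ncard = ∑ x, (S ∩ {e | e.fst = x}).ncard := by
  rw [← finsum_eq_sum_of_fintype, ← Set.ncard_iUnion_of_finite (fun _ => Set.toFinite _)]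
  · congr 1
    ext e
    simp
  · intro x y hxy
    exact Set.disjoint_left.2 fun e hx hy => hxy (hx.2.symm.trans hy.2)

theorem IsKTDS.two_mul_le_ncard_inter_fiber {k : ℕ} {S : Set G.Dart}
    (hS : IsKTDS (inflation G) (2 * k) S) {x : V} (hx : 2 * k ≤ G.degree x) :
    2 * k ≤ (S ∩ {e | e.fst = x}).ncard := by
  by_cases hne : ∃ d ∈ S, d.fst = x
  · obtain ⟨d, hd, rfl⟩ := hne
    have := ncard_inter_neighborSet_inflation_add S d
    have := hS d
    split_ifs at * <;> omega
  · rcases Nat.eq_zero_or_pos k with rfl | hk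
    · exact Nat.zero_le _
    obtain ⟨y, hy⟩ := (G.degree_pos_iff_exists_adj x).1 (by omega)
    let d : G.Dart := ⟨(x, y), hy⟩
    have h0 : (S ∩ {e | e.fst = d.fst}).ncard = 0 := (Set.ncard_eq_zero (Set.toFinite _)).2
      (Set.eq_empty_iff_forall_notMem.2 fun e he => hne ⟨e, he⟩)
    have h1 := ncard_inter_neighborSet_inflation_add S d
    have h2 := hS d
    rw [h0, if_neg fun h => hne ⟨d, h, rfl⟩] at h1
    split_ifs at h1 <;> omega

theorem IsKTDS.symm_mem {m : ℕ} {S : Set G.Dart} (hS : IsKTDS (inflation G) m S) {d : G.Dart}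
    (hd : d ∈ S) (hfiber : (S ∩ {e | e.fst = d.fst}).ncard = m) : d.symm ∈ S := by
  by_contra h
  have := ncard_inter_neighborSet_inflation_add S d
  have := hS d
  rw [if_pos hd, if_neg h, hfiber] at *
  omega

theorem ncard_dartsIn (hHG : H ≤ G) : (dartsIn G H).ncard = ∑ x, (H.neighborSet x).ncard := by
  rw [ncard_eq_sum_ncard_inter_fiber]
  exact sum_congr rfl fun x _ => ncard_dartsIn_inter_fiber hHG x

theorem isKTDS_dartsIn (hHG : H ≤ G) {m : ℕ} (hH : ∀ x, m ≤ (H.neighborSet x).ncard) :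
    IsKTDS (inflation G) m (dartsIn G H) := by
  intro d
  have h1 := ncard_inter_neighborSet_inflation_add (dartsIn G H) d
  have h2 := hH d.fst
  rw [ncard_dartsIn_inter_fiber hHG] at h1
  by_cases hd : d ∈ dartsIn G H
  · rw [if_pos hd, if_pos (show d.symm ∈ dartsIn G H from hd.symm)] at h1
    omega
  · rw [if_neg hd] at h1
    split_ifs at h1 <;> omega

theorem IsKTDS.two_mul_mul_card_le_ncard {k : ℕ} {S : Set G.Dart}
    (hS : IsKTDS (inflation G) (2 * k) S) (hδ : 2 * k ≤ G.minDegree) :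
    2 * k * Fintype.card V ≤ S.ncard := by
  calc 2 * k * Fintype.card V = ∑ _x : V, 2 * k := by simp [mul_comm]
    _ ≤ S.ncard := by
      rw [ncard_eq_sum_ncard_inter_fiber]
      exact sum_le_sum fun x _ =>
        hS.two_mul_le_ncard_inter_fiber (hδ.trans (G.minDegree_le_degree x))

theorem IsKTDS.exists_le_ncard_neighborSet_eq {k : ℕ} {S : Set G.Dart}
    (hS : IsKTDS (inflation G) (2 * k) S) (hδ : 2 * k ≤ G.minDegree)
    (hcard : S.ncard = 2 * k * Fintype.card V) :
    ∃ H ≤ G, ∀ x, (H.neighborSet x).ncard = 2 * k := by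
  have hfiber (x : V) : (S ∩ {e | e.fst = x}).ncard = 2 * k := by
    have hsum : ∑ _x : V, 2 * k = ∑ x, (S ∩ {e | e.fst = x}).ncard := by
      rw [← ncard_eq_sum_ncard_inter_fiber, hcard]
      simp [mul_comm]
    refine ((sum_eq_sum_iff_of_le fun x _ => ?_).1 hsum x (mem_univ x)).symm
    exact hS.two_mul_le_ncard_inter_fiber (hδ.trans (G.minDegree_le_degree x))
  let H : SimpleGraph V :=
    { Adj := fun a b => ∃ h : G.Adj a b, (⟨(a, b), h⟩ : G.Dart) ∈ S
      symm := ⟨fun a _ ⟨h, hd⟩ => ⟨h.symm, hS.symm_mem hd (hfiber a)⟩⟩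
      loopless := ⟨fun _ ⟨h, _⟩ => h.ne rfl⟩ }
  have hHG : H ≤ G := fun _ _ h => h.1
  have hHS : dartsIn G H = S := Set.ext fun d => ⟨fun ⟨_, h⟩ => h, fun h => ⟨d.adj, h⟩⟩
  refine ⟨H, hHG, fun x => ?_⟩
  rw [← ncard_dartsIn_inter_fiber hHG, hHS, hfiber]

theorem ncard_neighborSet_iSup {ι : Type*} [Fintype ι] {F : ι → SimpleGraph V}
    (hF : Pairwise (Disjoint on F)) (x : V) :
    ((⨆ i, F i).neighborSet x).ncard = ∑ i, ((F i).neighborSet x).ncard := by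
  rw [← finsum_eq_sum_of_fintype, ← Set.ncard_iUnion_of_finite fun _ => Set.toFinite _]
  · congr 1
    ext u
    simp
  · exact fun i j hij => Set.disjoint_left.2 fun u hi hj => disjoint_left.1 (hF hij) _ _ hi hj

theorem IsKHLD.exists_isKTDS {k : ℕ} (h : IsKHLD G k) :
    ∃ S : Set G.Dart, IsKTDS (inflation G) (2 * k) S ∧ S.ncard = 2 * k * Fintype.card V := by
  obtain ⟨F, hF, hdisj⟩ := h
  have hle : ⨆ i, F i ≤ G := iSup_le fun i => (hF i).1
  have hdeg (x : V) : ((⨆ i, F i).neighborSet x).ncard = 2 * k := by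
    rw [ncard_neighborSet_iSup (fun i j => hdisj i j)]
    simp [(hF _).2, mul_comm]
  refine ⟨dartsIn G (⨆ i, F i), isKTDS_dartsIn hle fun x => (hdeg x).ge, ?_⟩
  rw [ncard_dartsIn hle, sum_congr rfl fun x _ => hdeg x]
  simp [mul_comm]

end Inflation

theorem stmt3_general {V : Type*} [Fintype V] (G : SimpleGraph V) [DecidableRel G.Adj]
    (n k : ℕ) (hn : Fintype.card V = n) (hδ : 2 * k ≤ G.minDegree) :
    ktdn (inflation G) (2 * k) = 2 * k * n ↔ IsKHLD G k := by
  subst hn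
  have hlower : 2 * k * Fintype.card V ∈
      lowerBounds {m | ∃ S, IsKTDS (inflation G) (2 * k) S ∧ S.ncard = m} := by
    rintro _ ⟨S, hS, rfl⟩
    exact hS.two_mul_mul_card_le_ncard hδ
  have huniv : IsKTDS (inflation G) (2 * k) (dartsIn G G) :=
    isKTDS_dartsIn le_rfl fun x =>
      (ncard_neighborSet_eq_degree (G := G) x).symm ▸ hδ.trans (G.minDegree_le_degree x)
  constructor
  · intro h
    obtain ⟨S, hS, hcard⟩ : 2 * k * Fintype.card V ∈
        {m | ∃ S, IsKTDS (inflation G) (2 * k) S ∧ S.ncard = m} :=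
      h ▸ Nat.sInf_mem ⟨_, _, huniv, rfl⟩
    obtain ⟨H, hHG, hH⟩ := hS.exists_le_ncard_neighborSet_eq hδ hcard
    exact isKHLD_of_le_of_ncard_neighborSet_eq hHG hH
  · intro h
    obtain ⟨S, hS, hcard⟩ := h.exists_isKTDS
    exact IsLeast.csInf_eq ⟨⟨S, hS, hcard⟩, hlower⟩

/-- **Theorem (`γ_{×2k,t}(G_I) = 2kn` iff `G` is a kHLD-graph).** -/
theorem stmt3 {V : Type*} [Fintype V] (G : SimpleGraph V) [DecidableRel G.Adj]
    (n k : ℕ) (hn : Fintype.card V = n) (hk : 1 ≤ k) (hδ : 2 * k ≤ G.minDegree) :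
    ktdn (inflation G) (2 * k) = 2 * k * n ↔ IsKHLD G k :=
  stmt3_general G n k hn hδ
end

section
/- Let n > k ≥ 2 be integers. Then γ_{×k,t}((K_n)_I) = nk + 1 if k and n are both odd, and γ_{×k,t}((K_n)_I) = nk otherwise. -/
open SimpleGraph

namespace Stmt10Aux

open scoped Classical

variable {n : ℕ}

abbrev Kn (n : ℕ) : SimpleGraph (Fin n) := ⊤

abbrev D (n : ℕ) := (Kn n).Dart

instance : Finite (D n) := Finite.of_injective _ Dart.toProd_injective

lemma infl_adj {d e : D n} :
    (inflation (Kn n)).Adj d e ↔ d ≠ e ∧ (d.fst = e.fst ∨ e = d.symm) := by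
  show (SimpleGraph.fromRel _).Adj d e ↔ _
  rw [fromRel_adj]
  constructor
  · rintro ⟨h, (h' | h') | (h' | h')⟩
    · exact ⟨h, Or.inl h'⟩
    · exact ⟨h, Or.inr (Dart.ext _ _ (by rw [Dart.symm_toProd, h', Prod.swap_swap]))⟩
    · exact ⟨h, Or.inl h'.symm⟩
    · exact ⟨h, Or.inr (Dart.ext _ _ (by rw [Dart.symm_toProd, h']))⟩
  · rintro ⟨h, h' | rfl⟩
    · exact ⟨h, Or.inl (Or.inl h')⟩
    · exact ⟨h, Or.inr (Or.inr (by simp))⟩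

lemma nbhd (d : D n) :
    (inflation (Kn n)).neighborSet d = ({e : D n | e.fst = d.fst} \ {d}) ∪ {d.symm} := by
  ext e
  simp only [mem_neighborSet, infl_adj, Set.mem_union, Set.mem_diff, Set.mem_setOf_eq,
    Set.mem_singleton_iff]
  constructor
  · rintro ⟨h, h' | rfl⟩
    · exact Or.inl ⟨h'.symm, fun he => h he.symm⟩
    · exact Or.inr rfl
  · rintro (⟨h1, h2⟩ | rfl)
    · exact ⟨fun he => h2 he.symm, Or.inl h1.symm⟩
    · exact ⟨fun he => d.symm_ne he.symm, Or.inr rfl⟩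


def sx (S : Set (D n)) (x : Fin n) : Set (D n) := S ∩ {e | e.fst = x}

lemma count (S : Set (D n)) (d : D n) :
    (S ∩ (inflation (Kn n)).neighborSet d).ncard + (if d ∈ S then 1 else 0)
      = (sx S d.fst).ncard + (if d.symm ∈ S then 1 else 0) := by
  classical
  have hsplit : S ∩ (inflation (Kn n)).neighborSet d
      = (sx S d.fst \ {d}) ∪ (S ∩ {d.symm}) := by
    rw [nbhd]
    ext e
    simp only [sx, Set.mem_inter_iff, Set.mem_union, Set.mem_diff, Set.mem_setOf_eq,
      Set.mem_singleton_iff]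
    tauto
  have hdisj : Disjoint (sx S d.fst \ {d}) (S ∩ {d.symm}) := by
    rw [Set.disjoint_left]
    rintro e ⟨⟨_, he⟩, _⟩ ⟨_, rfl⟩
    exact d.symm.fst_ne_snd (by simpa using he)
  rw [hsplit, Set.ncard_union_eq hdisj]
  have h2 : (S ∩ {d.symm}).ncard = if d.symm ∈ S then 1 else 0 := by
    split
    · rw [Set.inter_eq_self_of_subset_right (by simpa), Set.ncard_singleton]
    · rw [Set.inter_singleton_eq_empty.2 (by assumption), Set.ncard_empty]
  rw [h2]
  have h1 : (sx S d.fst \ {d}).ncard + (if d ∈ S then 1 else 0) = (sx S d.fst).ncard := by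
    split
    · exact Set.ncard_diff_singleton_add_one (by exact ⟨‹d ∈ S›, rfl⟩) (Set.toFinite _)
    · rw [Set.diff_singleton_eq_self (fun hd => ‹d ∉ S› hd.1), add_zero]
  omega

lemma exists_dart (hn : 2 ≤ n) (x : Fin n) : ∃ d : D n, d.fst = x := by
  haveI : Nontrivial (Fin n) := Fin.nontrivial_iff_two_le.mpr hn
  obtain ⟨y, hy⟩ := exists_ne x
  exact ⟨⟨(x, y), by simp [hy.symm]⟩, rfl⟩

lemma sx_lb {k : ℕ} {S : Set (D n)} (hk : 2 ≤ k) (hn : 2 ≤ n)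
    (hS : IsKTDS (inflation (Kn n)) k S) (x : Fin n) : k ≤ (sx S x).ncard := by
  classical
  by_cases hx : ∃ d ∈ S, d.fst = x
  · obtain ⟨d, hd, rfl⟩ := hx
    have := count S d
    have hk' := hS d
    simp only [if_pos hd] at this
    split at this <;> omega
  · obtain ⟨d, rfl⟩ := exists_dart hn x
    have := count S d
    have hk' := hS d
    have hd : d ∉ S := fun h => hx ⟨d, h, rfl⟩
    have hsx : sx S d.fst = ∅ := by
      ext e; simp only [sx, Set.mem_inter_iff, Set.mem_empty_iff_false, iff_false]
      rintro ⟨h1, h2⟩; exact hx ⟨e, h1, h2⟩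
    rw [hsx, Set.ncard_empty, if_neg hd] at this
    split at this <;> omega

lemma card_eq_sum (S : Set (D n)) : S.ncard = ∑ x : Fin n, (sx S x).ncard := by
  classical
  have hfin : S.Finite := Set.toFinite _
  have key : hfin.toFinset.card
      = ∑ x : Fin n, (hfin.toFinset.filter (fun e => e.fst = x)).card :=
    Finset.card_eq_sum_card_fiberwise (fun e _ => Finset.mem_univ e.fst)
  rw [← Set.ncard_coe_finset, Set.Finite.coe_toFinset] at key
  rw [key]
  refine Finset.sum_congr rfl fun x _ => ?_
  rw [← Set.ncard_coe_finset]
  congr 1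
  ext e
  simp only [Finset.coe_filter, Set.Finite.mem_toFinset, Set.mem_setOf_eq, sx,
    Set.mem_inter_iff]


lemma total_lb {k : ℕ} {S : Set (D n)} (hk : 2 ≤ k) (hn : 2 ≤ n)
    (hS : IsKTDS (inflation (Kn n)) k S) : n * k ≤ S.ncard := by
  rw [card_eq_sum]
  calc n * k = ∑ _x : Fin n, k := by simp [mul_comm]
  _ ≤ _ := Finset.sum_le_sum fun x _ => sx_lb hk hn hS x


lemma even_aux : ∀ (N : ℕ) (S : Set (D n)), S.ncard = N → (∀ d ∈ S, d.symm ∈ S) → Even N := by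
  intro N
  induction N using Nat.strong_induction_on with
  | _ N ih =>
    intro S hN hsymm
    rcases Set.eq_empty_or_nonempty S with rfl | ⟨d, hd⟩
    · simp only [Set.ncard_empty] at hN
      simp [← hN]
    · have hd2 : d.symm ∈ S := hsymm d hd
      set S' := S \ {d, d.symm} with hS'
      have hsub : ({d, d.symm} : Set (D n)) ⊆ S := by
        rintro e (rfl | rfl) <;> assumption
      have hunion : S' ∪ {d, d.symm} = S := Set.diff_union_of_subset hsub
      have hpair : ({d, d.symm} : Set (D n)).ncard = 2 :=
        Set.ncard_pair d.symm_ne.symm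
      have hcard : S'.ncard + 2 = N := by
        rw [← hN, ← hunion, Set.ncard_union_eq Set.disjoint_sdiff_left, hpair]
      have hsymm' : ∀ e ∈ S', e.symm ∈ S' := by
        rintro e ⟨heS, hepair⟩
        refine ⟨hsymm e heS, ?_⟩
        rintro (h | h)
        · exact hepair (Or.inr (by rw [← h, Dart.symm_symm]; exact rfl))
        · exact hepair (Or.inl (by
            have := congrArg Dart.symm h
            rwa [Dart.symm_symm, Dart.symm_symm] at this))
      have := ih S'.ncard (by omega) S' rfl hsymm'
      obtain ⟨t, ht⟩ := this
      exact ⟨t + 1, by omega⟩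

lemma sx_exact {k : ℕ} {S : Set (D n)} (hk : 2 ≤ k) (hn : 2 ≤ n)
    (hS : IsKTDS (inflation (Kn n)) k S) (hcard : S.ncard = n * k) :
    ∀ x, (sx S x).ncard = k := by
  intro x
  by_contra hx
  have hlt : k < (sx S x).ncard := lt_of_le_of_ne (sx_lb hk hn hS x) (Ne.symm hx)
  have : ∑ _y : Fin n, k < ∑ y : Fin n, (sx S y).ncard :=
    Finset.sum_lt_sum (fun y _ => sx_lb hk hn hS y) ⟨x, Finset.mem_univ x, hlt⟩
  rw [← card_eq_sum, hcard] at this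
  simp only [Finset.sum_const, Finset.card_univ, Fintype.card_fin, smul_eq_mul] at this
  omega

lemma not_nk {k : ℕ} (hk : 2 ≤ k) (hkn : k < n) (hodd : Odd (n * k)) :
    ¬ ∃ S : Set (D n), IsKTDS (inflation (Kn n)) k S ∧ S.ncard = n * k := by
  rintro ⟨S, hS, hcard⟩
  have hn : 2 ≤ n := by omega
  have hsymm : ∀ d ∈ S, d.symm ∈ S := by
    intro d hd
    have hc := count S d
    rw [sx_exact hk hn hS hcard, if_pos hd] at hc
    have := hS d
    by_contra hns
    rw [if_neg hns] at hc
    omega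
  have := even_aux (n * k) S hcard hsymm
  exact (Nat.not_even_iff_odd.mpr hodd) this

section Upper

variable (R : Fin n → Fin n → Prop) (hirr : ∀ a, ¬ R a a) (hsym : ∀ a b, R a b → R b a)

def SR : Set (D n) := {d : D n | R d.fst d.snd}

include hirr in
lemma sx_SR (x : Fin n) : (sx (SR R) x).ncard = {y | R x y}.ncard := by
  have himg : (fun e : D n => e.snd) '' (sx (SR R) x) = {y | R x y} := by
    ext y
    simp only [Set.mem_image, Set.mem_setOf_eq]
    constructor
    · rintro ⟨e, ⟨heS, rfl⟩, rfl⟩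
      exact heS
    · intro hy
      have hne : x ≠ y := fun h => hirr x (h ▸ hy)
      exact ⟨⟨(x, y), by simp [hne]⟩, ⟨hy, rfl⟩, rfl⟩
  rw [← himg, Set.ncard_image_of_injOn]
  rintro e ⟨_, he⟩ e' ⟨_, he'⟩ hsnd
  exact Dart.ext _ _ (Prod.ext (he.trans he'.symm) hsnd)

include hsym in
lemma symm_mem_SR (d : D n) : (d.symm ∈ SR R) = (d ∈ SR R) := by
  simp only [SR, Set.mem_setOf_eq, Dart.symm_toProd, Prod.fst_swap, Prod.snd_swap, eq_iff_iff]
  exact ⟨hsym _ _, hsym _ _⟩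

include hirr hsym in
lemma isKTDS_SR {k : ℕ} (hdeg : ∀ x, k ≤ ({y | R x y} : Set (Fin n)).ncard) :
    IsKTDS (inflation (Kn n)) k (SR R) := by
  intro d
  have hc := count (SR R) d
  rw [symm_mem_SR R hsym, sx_SR R hirr] at hc
  have := hdeg d.fst
  omega

include hirr in
lemma card_SR : (SR R).ncard = ∑ x : Fin n, ({y | R x y} : Set (Fin n)).ncard := by
  rw [card_eq_sum]
  exact Finset.sum_congr rfl fun x _ => sx_SR R hirr x

end Upper


section ZModCount

variable [NeZero n]

def cz (i : Fin n) : ZMod n := (i.val : ZMod n)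

lemma cz_inj : Function.Injective (cz (n := n)) := by
  intro i j h
  have hi : (cz i).val = i.val := ZMod.val_cast_of_lt i.isLt
  have hj : (cz j).val = j.val := ZMod.val_cast_of_lt j.isLt
  exact Fin.ext (by rw [← hi, ← hj, h])

lemma cz_surj : Function.Surjective (cz (n := n)) := by
  intro z
  exact ⟨⟨z.val, ZMod.val_lt z⟩, ZMod.natCast_rightInverse z⟩

lemma ncard_preimage_cz (A : Set (ZMod n)) : (cz ⁻¹' A).ncard = A.ncard := by
  conv_rhs => rw [← Set.image_preimage_eq A cz_surj]
  rw [Set.ncard_image_of_injective _ cz_inj]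

lemma ncard_diff_set (x0 : ZMod n) (A : Set (ZMod n)) :
    ({y : Fin n | cz y - x0 ∈ A}).ncard = A.ncard := by
  have h1 : {y : Fin n | cz y - x0 ∈ A} = cz ⁻¹' ((fun z => z + x0) '' A) := by
    ext y
    simp only [Set.mem_setOf_eq, Set.mem_preimage, Set.mem_image]
    constructor
    · intro h
      exact ⟨cz y - x0, h, by ring⟩
    · rintro ⟨a, ha, h⟩
      rw [← h, add_sub_cancel_right]
      exact ha
  rw [h1, ncard_preimage_cz, Set.ncard_image_of_injective _ (add_left_injective x0)]

/-- the circulant difference set with jumps `±1, …, ±m` -/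
def Jset (n m : ℕ) : Set (ZMod n) :=
  ((fun j : ℕ => (j : ZMod n)) '' Set.Icc 1 m) ∪ ((fun j : ℕ => -(j : ZMod n)) '' Set.Icc 1 m)

lemma neg_natCast_eq {j : ℕ} (hj : j ≤ n) : -(j : ZMod n) = ((n - j : ℕ) : ZMod n) := by
  rw [neg_eq_iff_add_eq_zero, ← Nat.cast_add]
  have : n - j + j = n := Nat.sub_add_cancel hj
  rw [add_comm, this, ZMod.natCast_self]

lemma val_of_mem_Jset {m : ℕ} (hm : 2 * m < n) {z : ZMod n} (hz : z ∈ Jset n m) :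
    (1 ≤ z.val ∧ z.val ≤ m) ∨ (n - m ≤ z.val ∧ z.val ≤ n - 1) := by
  rcases hz with ⟨j, ⟨hj1, hj2⟩, rfl⟩ | ⟨j, ⟨hj1, hj2⟩, rfl⟩
  all_goals dsimp only
  · left
    rw [ZMod.val_cast_of_lt (by omega)]
    omega
  · right
    rw [neg_natCast_eq (n := n) (j := j) (by omega), ZMod.val_cast_of_lt (by omega)]
    omega

lemma zero_notMem_Jset {m : ℕ} (hm : 2 * m < n) : (0 : ZMod n) ∉ Jset n m := by
  intro h
  have := val_of_mem_Jset hm h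
  rw [ZMod.val_zero] at this
  have hn : 1 ≤ n := Nat.one_le_iff_ne_zero.mpr (NeZero.ne n)
  omega

lemma neg_mem_Jset {m : ℕ} {z : ZMod n} (hz : z ∈ Jset n m) : -z ∈ Jset n m := by
  rcases hz with ⟨j, hj, rfl⟩ | ⟨j, hj, rfl⟩
  · exact Or.inr ⟨j, hj, rfl⟩
  · exact Or.inl ⟨j, hj, by rw [neg_neg]⟩

lemma ncard_Icc_nat (a b : ℕ) : (Set.Icc a b).ncard = b + 1 - a := by
  rw [← Finset.coe_Icc, Set.ncard_coe_finset, Nat.card_Icc]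

lemma ncard_Jset {m : ℕ} (hm : 2 * m < n) : (Jset n m).ncard = 2 * m := by
  have hpos : (((fun j : ℕ => (j : ZMod n)) '' Set.Icc 1 m)).ncard = m := by
    rw [Set.ncard_image_of_injOn, ncard_Icc_nat]
    · omega
    · intro a ha b hb hab
      dsimp only at hab
      have ha' : ((a : ZMod n)).val = a := ZMod.val_cast_of_lt (by simp at ha; omega)
      have hb' : ((b : ZMod n)).val = b := ZMod.val_cast_of_lt (by simp at hb; omega)
      have := congrArg ZMod.val hab
      rw [ha', hb'] at this
      exact this
  have hneg : (((fun j : ℕ => -(j : ZMod n)) '' Set.Icc 1 m)).ncard = m := by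
    rw [Set.ncard_image_of_injOn, ncard_Icc_nat]
    · omega
    · intro a ha b hb hab
      dsimp only at hab
      simp only [neg_inj] at hab
      have ha' : ((a : ZMod n)).val = a := ZMod.val_cast_of_lt (by simp at ha; omega)
      have hb' : ((b : ZMod n)).val = b := ZMod.val_cast_of_lt (by simp at hb; omega)
      have := congrArg ZMod.val hab
      rw [ha', hb'] at this
      exact this
  have hdisj : Disjoint ((fun j : ℕ => (j : ZMod n)) '' Set.Icc 1 m)
      ((fun j : ℕ => -(j : ZMod n)) '' Set.Icc 1 m) := by
    rw [Set.disjoint_left]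
    rintro z hz1 hz2
    have h1 := val_of_mem_Jset hm (Or.inl hz1 : z ∈ Jset n m)
    obtain ⟨j, ⟨hj1, hj2⟩, rfl⟩ := hz1
    have hv : ((j : ZMod n)).val = j := ZMod.val_cast_of_lt (by omega)
    obtain ⟨j', ⟨hj1', hj2'⟩, he⟩ := hz2
    dsimp only at he h1
    have hv' : (-(j' : ZMod n)).val = n - j' := by
      rw [neg_natCast_eq (n := n) (j := j') (by omega), ZMod.val_cast_of_lt (by omega)]
    rw [he] at hv'
    omega
  rw [Jset, Set.ncard_union_eq hdisj, hpos, hneg]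
  omega

end ZModCount


section UpperConcrete

variable [NeZero n]

lemma mem_ktds_of_J {k : ℕ} (J : Set (ZMod n)) (h0 : (0 : ZMod n) ∉ J)
    (hneg : ∀ z ∈ J, -z ∈ J) (hcard : J.ncard = k) :
    ∃ S : Set (D n), IsKTDS (inflation (Kn n)) k S ∧ S.ncard = n * k := by
  set R : Fin n → Fin n → Prop := fun a b => cz b - cz a ∈ J with hR
  have hirr : ∀ a, ¬ R a a := by
    intro a h
    rw [hR] at h
    simp only [sub_self] at h
    exact h0 h
  have hsym : ∀ a b, R a b → R b a := by
    intro a b h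
    have := hneg _ h
    rwa [neg_sub] at this
  have hdeg : ∀ x : Fin n, ({y | R x y} : Set (Fin n)).ncard = k := by
    intro x
    have : ({y | R x y} : Set (Fin n)) = {y : Fin n | cz y - cz x ∈ J} := rfl
    rw [this, ncard_diff_set, hcard]
  refine ⟨SR R, isKTDS_SR R hirr hsym (fun x => (hdeg x).ge), ?_⟩
  rw [card_SR R hirr]
  simp only [hdeg, Finset.sum_const, Finset.card_univ, Fintype.card_fin, smul_eq_mul]

lemma case_even {k : ℕ} (hk : 2 ≤ k) (hkn : k < n) (hke : k % 2 = 0) :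
    ∃ S : Set (D n), IsKTDS (inflation (Kn n)) k S ∧ S.ncard = n * k := by
  have hm : 2 * (k / 2) < n := by omega
  refine mem_ktds_of_J (Jset n (k / 2)) (zero_notMem_Jset hm) (fun z hz => neg_mem_Jset hz) ?_
  rw [ncard_Jset hm]
  omega

lemma case_odd_even {k : ℕ} (hk : 2 ≤ k) (hkn : k < n) (hko : k % 2 = 1) (hne : n % 2 = 0) :
    ∃ S : Set (D n), IsKTDS (inflation (Kn n)) k S ∧ S.ncard = n * k := by
  set m := k / 2 with hm'
  have hm : 2 * m < n := by omega
  set half : ZMod n := ((n / 2 : ℕ) : ZMod n) with hhalf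
  have hvhalf : half.val = n / 2 := ZMod.val_cast_of_lt (by omega)
  have hhalf_not : half ∉ Jset n m := by
    intro h
    have := val_of_mem_Jset hm h
    rw [hvhalf] at this
    omega
  have hneghalf : -half = half := by
    rw [hhalf, neg_natCast_eq (n := n) (j := n / 2) (by omega)]
    congr 1
    omega
  refine mem_ktds_of_J (Jset n m ∪ {half}) ?_ ?_ ?_
  · rintro (h | h)
    · exact zero_notMem_Jset hm h
    · rw [Set.mem_singleton_iff] at h
      have := congrArg ZMod.val h
      rw [ZMod.val_zero, hvhalf] at this
      omega
  · rintro z (hz | hz)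
    · exact Or.inl (neg_mem_Jset hz)
    · rw [Set.mem_singleton_iff] at hz
      subst hz
      exact Or.inr (by rw [hneghalf]; rfl)
  · rw [Set.ncard_union_eq (Set.disjoint_singleton_right.mpr hhalf_not), ncard_Jset hm,
      Set.ncard_singleton]
    omega


lemma case_odd_odd {k : ℕ} (hk : 2 ≤ k) (hkn : k < n) (hko : k % 2 = 1) (hno : n % 2 = 1) :
    ∃ S : Set (D n), IsKTDS (inflation (Kn n)) k S ∧ S.ncard = n * k + 1 := by
  have hk3 : 3 ≤ k := by omega
  have hn5 : 5 ≤ n := by omega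
  set m := k / 2 with hm'
  set h := n / 2 with hh'
  have hkm : k = 2 * m + 1 := by omega
  have hnh : n = 2 * h + 1 := by omega
  have hmh : m ≤ h - 1 := by omega
  have hm2 : 2 * m < n := by omega
  set Hc : ZMod n := ((h : ℕ) : ZMod n) with hHc
  have hvH : Hc.val = h := ZMod.val_cast_of_lt (by omega)
  have hvnH : (-Hc).val = h + 1 := by
    rw [hHc, neg_natCast_eq (n := n) (j := h) (by omega), ZMod.val_cast_of_lt (by omega)]
    omega
  have key : ∀ u : ZMod n, (u - Hc).val ≤ h ↔ h ≤ u.val := by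
    intro u
    have huval := ZMod.val_lt u
    rcases le_or_gt h u.val with hle | hlt
    · have he : u - Hc = ((u.val - h : ℕ) : ZMod n) := by
        conv_lhs => rw [← ZMod.natCast_rightInverse u]
        rw [Nat.cast_sub hle]
      rw [he, ZMod.val_cast_of_lt (by omega)]
      omega
    · have he : u - Hc = ((u.val + (h + 1) : ℕ) : ZMod n) := by
        conv_lhs => rw [← ZMod.natCast_rightInverse u]
        rw [sub_eq_add_neg, hHc, neg_natCast_eq (n := n) (j := h) (by omega), ← Nat.cast_add]
        congr 1
        omega
      rw [he, ZMod.val_cast_of_lt (by omega)]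
      omega
  set ExtS : ZMod n → Set (ZMod n) := fun u =>
    {v | (v = u + Hc ∧ u.val ≤ h) ∨ (u = v + Hc ∧ v.val ≤ h)} with hExtS
  have ExtS_eq : ∀ u, ExtS u = {v | (v = u + Hc ∧ u.val ≤ h) ∨ (v = u - Hc ∧ h ≤ u.val)} := by
    intro u
    ext v
    simp only [hExtS, Set.mem_setOf_eq]
    have h1 : u = v + Hc ↔ v = u - Hc := by
      constructor
      · intro hx; rw [hx]; ring
      · intro hx; rw [hx]; ring
    constructor
    · rintro (hv | ⟨hv1, hv2⟩)
      · exact Or.inl hv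
      · have := h1.mp hv1
        subst this
        exact Or.inr ⟨rfl, (key u).mp hv2⟩
    · rintro (hv | ⟨hv1, hv2⟩)
      · exact Or.inl hv
      · subst hv1
        exact Or.inr ⟨h1.mpr rfl, (key u).mpr hv2⟩
  have hHne : Hc ≠ 0 := by
    intro hx
    rw [hx, ZMod.val_zero] at hvH
    omega
  have hne2 : ∀ u : ZMod n, u + Hc ≠ u - Hc := by
    intro u he
    have h2 : Hc + Hc = 0 := by linear_combination he
    have h3 : Hc + Hc = ((h + h : ℕ) : ZMod n) := by push_cast; rfl
    rw [h3] at h2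
    have h4 := congrArg ZMod.val h2
    rw [ZMod.val_cast_of_lt (by omega), ZMod.val_zero] at h4
    omega
  have hExtCard : ∀ u : ZMod n, (ExtS u).ncard = if u.val = h then 2 else 1 := by
    intro u
    have huval := ZMod.val_lt u
    rcases lt_trichotomy u.val h with hlt | heq | hgt
    · have : ExtS u = {u + Hc} := by
        rw [ExtS_eq]
        ext v
        simp only [Set.mem_setOf_eq, Set.mem_singleton_iff]
        constructor
        · rintro (⟨hv, _⟩ | ⟨_, hv⟩)
          · exact hv
          · omega
        · intro hv; exact Or.inl ⟨hv, by omega⟩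
      rw [this, Set.ncard_singleton, if_neg (by omega)]
    · have : ExtS u = {u + Hc, u - Hc} := by
        rw [ExtS_eq]
        ext v
        simp only [Set.mem_setOf_eq, Set.mem_insert_iff, Set.mem_singleton_iff]
        constructor
        · rintro (⟨hv, _⟩ | ⟨hv, _⟩)
          · exact Or.inl hv
          · exact Or.inr hv
        · rintro (hv | hv)
          · exact Or.inl ⟨hv, by omega⟩
          · exact Or.inr ⟨hv, by omega⟩
      rw [this, Set.ncard_pair (hne2 u), if_pos heq]
    · have : ExtS u = {u - Hc} := by
        rw [ExtS_eq]
        ext v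
        simp only [Set.mem_setOf_eq, Set.mem_singleton_iff]
        constructor
        · rintro (⟨_, hv⟩ | ⟨hv, _⟩)
          · omega
          · exact hv
        · intro hv; exact Or.inr ⟨hv, by omega⟩
      rw [this, Set.ncard_singleton, if_neg (by omega)]
  set R : Fin n → Fin n → Prop :=
    fun a b => (cz b - cz a ∈ Jset n m) ∨ cz b ∈ ExtS (cz a) with hR
  have hirr : ∀ a, ¬ R a a := by
    intro a hx
    rcases hx with hx | hx
    · rw [sub_self] at hx
      exact zero_notMem_Jset hm2 hx
    · rw [ExtS_eq] at hx
      rcases hx with ⟨hv, _⟩ | ⟨hv, _⟩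
      · exact hHne (by rwa [left_eq_add] at hv)
      · exact hHne (by
          have : cz a - Hc = cz a := hv.symm
          rwa [sub_eq_self] at this)
  have hsym : ∀ a b, R a b → R b a := by
    intro a b hx
    rcases hx with hx | hx
    · left
      have := neg_mem_Jset hx
      rwa [neg_sub] at this
    · right
      rw [hExtS] at hx ⊢
      simp only [Set.mem_setOf_eq] at hx ⊢
      tauto
  have hczval : ∀ x : Fin n, (cz x).val = x.val := fun x => ZMod.val_cast_of_lt x.isLt
  have hdeg : ∀ x : Fin n,
      ({y | R x y} : Set (Fin n)).ncard = 2 * m + (if x.val = h then 2 else 1) := by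
    intro x
    have hsplit : ({y | R x y} : Set (Fin n))
        = {y : Fin n | cz y - cz x ∈ Jset n m} ∪ (cz ⁻¹' ExtS (cz x)) := rfl
    have hdisj : Disjoint ({y : Fin n | cz y - cz x ∈ Jset n m}) (cz ⁻¹' ExtS (cz x)) := by
      rw [Set.disjoint_left]
      rintro y hy1 hy2
      rw [Set.mem_preimage, ExtS_eq] at hy2
      have hvals := val_of_mem_Jset hm2 hy1
      rcases hy2 with ⟨hv, _⟩ | ⟨hv, _⟩
      · rw [hv, add_sub_cancel_left, hvH] at hvals
        omega
      · have h5 : cz x - Hc - cz x = -Hc := by ring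
        rw [hv, h5, hvnH] at hvals
        omega
    rw [hsplit, Set.ncard_union_eq hdisj, ncard_diff_set, ncard_Jset hm2,
      ncard_preimage_cz, hExtCard, hczval]
  refine ⟨SR R, isKTDS_SR R hirr hsym (fun x => by rw [hdeg x]; split <;> omega), ?_⟩
  rw [card_SR R hirr]
  have hsum : ∑ x : Fin n, ({y | R x y} : Set (Fin n)).ncard
      = ∑ x : Fin n, (2 * m + (if x.val = h then 2 else 1)) :=
    Finset.sum_congr rfl fun x _ => hdeg x
  have hsum2 : ∑ x : Fin n, (if x.val = h then 2 else 1)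
      = ∑ x : Fin n, ((if x = (⟨h, by omega⟩ : Fin n) then 1 else 0) + 1) := by
    refine Finset.sum_congr rfl fun x _ => ?_
    by_cases hxx : x.val = h
    · rw [if_pos hxx, if_pos (Fin.ext hxx)]
    · rw [if_neg hxx, if_neg (fun hc => hxx (by rw [hc]))]
  rw [hsum, Finset.sum_add_distrib, hsum2, Finset.sum_add_distrib]
  simp only [Finset.sum_const, Finset.card_univ, Fintype.card_fin, smul_eq_mul,
    Finset.sum_ite_eq', Finset.mem_univ, if_pos]
  rw [hkm]
  ring

end UpperConcrete

end Stmt10Aux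


/-- **Proposition (`γ_{×k,t}((K_n)_I)`).** For `n > k ≥ 2`:
`γ_{×k,t}((K_n)_I) = nk + 1` if `k` and `n` are both odd, and `= nk` otherwise. -/
theorem stmt10 (n k : ℕ) (hk : 2 ≤ k) (hkn : k < n) :
    (Odd k ∧ Odd n → ktdn (inflation (⊤ : SimpleGraph (Fin n))) k = n * k + 1) ∧
    (¬ (Odd k ∧ Odd n) → ktdn (inflation (⊤ : SimpleGraph (Fin n))) k = n * k) := by
  have hn2 : 2 ≤ n := by omega
  haveI : NeZero n := ⟨by omega⟩
  constructor
  · rintro ⟨hok, hon⟩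
    rw [Nat.odd_iff] at hok hon
    obtain ⟨S, hS, hc⟩ := Stmt10Aux.case_odd_odd (n := n) hk hkn hok hon
    refine le_antisymm (Nat.sInf_le ⟨S, hS, hc⟩) ?_
    refine le_csInf ⟨_, S, hS, hc⟩ ?_
    rintro b ⟨S', hS', rfl⟩
    have h1 := Stmt10Aux.total_lb hk hn2 hS'
    have hnk : Odd (n * k) := by
      rw [Nat.odd_iff, Nat.mul_mod, hok, hon]
    have h2 : S'.ncard ≠ n * k := fun he => Stmt10Aux.not_nk hk hkn hnk ⟨S', hS', he⟩
    omega
  · intro hno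
    obtain ⟨S, hS, hc⟩ : ∃ S : Set (Stmt10Aux.D n),
        IsKTDS (inflation (Stmt10Aux.Kn n)) k S ∧ S.ncard = n * k := by
      rcases Nat.even_or_odd k with hke | hko
      · exact Stmt10Aux.case_even hk hkn (Nat.even_iff.mp hke)
      · have hne : Even n := by
          rcases Nat.even_or_odd n with he | ho
          · exact he
          · exact absurd ⟨hko, ho⟩ hno
        exact Stmt10Aux.case_odd_even hk hkn (Nat.odd_iff.mp hko) (Nat.even_iff.mp hne)
    refine le_antisymm (Nat.sInf_le ⟨S, hS, hc⟩) ?_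
    refine le_csInf ⟨_, S, hS, hc⟩ ?_
    rintro b ⟨S', hS', rfl⟩
    exact Stmt10Aux.total_lb hk hn2 hS'
end

section
/- Let 2 ≤ k < n ≤ m be integers and let F be a graph with a cut-edge e such that the two components of F − e are G = K_n and H = K_m. Then γ_{×k,t}(F_I) = γ_{×k,t}(G_I) + γ_{×k,t}(H_I) − 2 if k, m and n are all odd, and γ_{×k,t}(F_I) = γ_{×k,t}(G_I) + γ_{×k,t}(H_I) otherwise. -/
open SimpleGraph

/-!
A dart `d = (x, y)` of `G` is adjacent in `G_I` exactly to the other darts at `x` and to its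
reverse `(y, x)`. Hence, for `k ≥ 2`, a `k`-tuple total dominating set `S` contains at least `k`
darts at every vertex, so `|S| ≥ k |V|`; if `|S| = k |V|`, it contains exactly `k` darts at every
vertex, is therefore closed under reversal, and so has even size. This gives
`γ_{×k,t}(G_I) ≥ k |V| + (k |V| mod 2)`. Conversely, the darts of a spanning subgraph of minimum
degree `≥ k` form a `k`-tuple total dominating set whose size is its degree sum.

On `K_q` a circulant graph, completed by an antipodal or a near-perfect matching, has minimum
degree `k` and degree sum `k q + (k q mod 2)`. For `F` the disjoint union of two such graphs works
unless `k`, `n`, `m` are all odd; then both are taken one short at the ends of the cut-edge, and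
the cut-edge is added. So `γ_{×k,t}((K_q)_I) = k q + (k q mod 2)` and
`γ_{×k,t}(F_I) = k (n + m) + (k (n + m) mod 2)`, from which the theorem is arithmetic.
-/

instance SimpleGraph.Dart.instFinite {V : Type*} [Finite V] (G : SimpleGraph V) :
    Finite G.Dart :=
  Finite.of_injective _ Dart.toProd_injective

def SimpleGraph.dartsFrom {V : Type*} (G : SimpleGraph V) (v : V) : Set G.Dart :=
  {d | d.fst = v}

section Inflation

variable {V : Type*} {G : SimpleGraph V} {k : ℕ} {S : Set G.Dart}

theorem neighborSet_inflation (d : G.Dart) :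
    (inflation G).neighborSet d = G.dartsFrom d.fst \ {d} ∪ {d.symm} := by
  ext e
  simp only [mem_neighborSet, inflation, fromRel_adj, dartsFrom, Set.mem_union, Set.mem_sdiff,
    Set.mem_ofPred_eq, Set.mem_singleton_iff, Dart.ext_iff, Dart.symm_toProd]
  constructor
  · rintro ⟨hne, (h | h) | (h | h)⟩
    · exact Or.inl ⟨h.symm, fun h' => hne (Dart.ext _ _ h'.symm)⟩
    · exact Or.inr (by rw [h, Prod.swap_swap])
    · exact Or.inl ⟨h, fun h' => hne (Dart.ext _ _ h'.symm)⟩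
    · exact Or.inr h
  · rintro (⟨h, hne⟩ | h)
    · exact ⟨fun h' => hne (congrArg Dart.toProd h'.symm), Or.inr (Or.inl h)⟩
    · refine ⟨fun h' => ?_, Or.inr (Or.inr h)⟩
      rw [← h', Prod.swap_prod_mk] at h
      exact d.adj.ne (congrArg Prod.fst h)

theorem ncard_inter_neighborSet_inflation [Finite V] (S : Set G.Dart) (d : G.Dart) :
    (S ∩ (inflation G).neighborSet d).ncard =
      ((S ∩ G.dartsFrom d.fst) \ {d}).ncard + (S ∩ {d.symm}).ncard := by
  rw [neighborSet_inflation, Set.inter_union_distrib_left, ← Set.inter_sdiff_assoc,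
    Set.ncard_union_eq]
  refine Set.disjoint_left.mpr fun e he he' => d.adj.ne.symm ?_
  rw [he'.2] at he
  exact he.1.2

theorem le_ncard_inter_dartsFrom [Finite V] (hk : 2 ≤ k) (hS : IsKTDS (inflation G) k S)
    (d : G.Dart) : k ≤ (S ∩ G.dartsFrom d.fst).ncard := by
  rcases (S ∩ G.dartsFrom d.fst).eq_empty_or_nonempty with h | ⟨e, he⟩
  · have := hS d
    rw [ncard_inter_neighborSet_inflation, h, Set.empty_sdiff, Set.ncard_empty] at this
    have := (Set.ncard_inter_le_ncard_right S {d.symm}).trans_eq (Set.ncard_singleton _)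
    omega
  · have hfst : e.fst = d.fst := he.2
    have := hS e
    rw [ncard_inter_neighborSet_inflation, hfst, Set.ncard_sdiff_singleton_of_mem (hfst ▸ he)]
      at this
    have := (Set.ncard_inter_le_ncard_right S {e.symm}).trans_eq (Set.ncard_singleton _)
    have := (Set.ncard_pos (Set.toFinite _)).mpr ⟨e, he⟩
    omega

theorem symm_mem_of_ncard_inter_dartsFrom_le [Finite V] (hS : IsKTDS (inflation G) k S)
    {d : G.Dart} (hd : d ∈ S) (hle : (S ∩ G.dartsFrom d.fst).ncard ≤ k) : d.symm ∈ S := by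
  by_contra hsymm
  have hmem : d ∈ S ∩ G.dartsFrom d.fst := ⟨hd, rfl⟩
  have := hS d
  rw [ncard_inter_neighborSet_inflation, Set.ncard_sdiff_singleton_of_mem hmem,
    Set.inter_singleton_eq_empty.mpr hsymm, Set.ncard_empty] at this
  have := (Set.ncard_pos (Set.toFinite _)).mpr ⟨d, hmem⟩
  omega

theorem isKTDS_inflation_of_symm_mem [Finite V] (hsymm : ∀ d ∈ S, d.symm ∈ S)
    (hle : ∀ v, k ≤ (S ∩ G.dartsFrom v).ncard) : IsKTDS (inflation G) k S := by
  intro d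
  rw [ncard_inter_neighborSet_inflation]
  by_cases hd : d ∈ S
  · have hmem : d ∈ S ∩ G.dartsFrom d.fst := ⟨hd, rfl⟩
    rw [Set.ncard_sdiff_singleton_of_mem hmem, Set.inter_singleton_of_mem (hsymm d hd),
      Set.ncard_singleton]
    have := (Set.ncard_pos (Set.toFinite _)).mpr ⟨d, hmem⟩
    have := hle d.fst
    omega
  · rw [Set.sdiff_singleton_eq_self fun h => hd h.1]
    exact (hle d.fst).trans (Nat.le_add_right _ _)

theorem ncard_eq_sum_ncard_inter_dartsFrom [Fintype V] (S : Set G.Dart) :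
    S.ncard = ∑ v, (S ∩ G.dartsFrom v).ncard := by
  rw [← finsum_eq_sum_of_fintype, ← Set.ncard_iUnion_of_finite (fun _ => Set.toFinite _)
    fun v w hvw => Set.disjoint_left.mpr fun d hv hw => hvw (hv.2.symm.trans hw.2)]
  congr 1
  ext d
  simp [dartsFrom]

theorem even_ncard_of_symm_mem [Finite V] (hsymm : ∀ d ∈ S, d.symm ∈ S) : Even S.ncard := by
  classical
  rw [Set.ncard_eq_toFinset_card S, Finset.card_eq_sum_card_image Dart.edge]
  refine Finset.even_sum _ fun e he => ?_
  obtain ⟨d, hd, rfl⟩ := Finset.mem_image.mp he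
  rw [Set.Finite.mem_toFinset] at hd
  have hfiber : {d' ∈ S.toFinite.toFinset | d'.edge = d.edge} = {d, d.symm} := by
    ext d'
    simp only [Finset.mem_filter, Set.Finite.mem_toFinset, dart_edge_eq_iff, Finset.mem_insert,
      Finset.mem_singleton]
    constructor
    · exact fun h => h.2
    · rintro (rfl | rfl)
      · exact ⟨hd, Or.inl rfl⟩
      · exact ⟨hsymm d hd, Or.inr rfl⟩
  rw [hfiber, Finset.card_pair d.symm_ne.symm]
  exact even_two

theorem ncard_setOf_adj_inter_dartsFrom {H : SimpleGraph V} (hH : H ≤ G) (v : V) :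
    ({d : G.Dart | H.Adj d.fst d.snd} ∩ G.dartsFrom v).ncard = (H.neighborSet v).ncard := by
  have himage : (fun d : G.Dart => d.snd) '' ({d : G.Dart | H.Adj d.fst d.snd} ∩ G.dartsFrom v) =
      H.neighborSet v := by
    ext w
    constructor
    · rintro ⟨d, ⟨hd, rfl⟩, rfl⟩
      exact hd
    · intro hw
      exact ⟨⟨(v, w), hH hw⟩, ⟨hw, rfl⟩, rfl⟩
  rw [← himage, Set.InjOn.ncard_image]
  rintro d ⟨-, hd⟩ e ⟨-, he⟩ h
  exact Dart.ext _ _ (Prod.ext (hd.trans he.symm) h)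

end Inflation

section TotalDomination

variable {W : Type*} {H : SimpleGraph W} {k : ℕ}

theorem ktdn_le_ncard {S : Set W} (hS : IsKTDS H k S) : ktdn H k ≤ S.ncard :=
  Nat.sInf_le ⟨S, hS, rfl⟩

theorem le_ktdn {b : ℕ} (hne : ∃ S, IsKTDS H k S) (h : ∀ S, IsKTDS H k S → b ≤ S.ncard) :
    b ≤ ktdn H k := by
  obtain ⟨S, hS⟩ := hne
  exact le_csInf ⟨_, S, hS, rfl⟩ (by rintro _ ⟨T, hT, rfl⟩; exact h T hT)

end TotalDomination

section InflationBounds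

variable {V : Type*} [Fintype V] {G : SimpleGraph V} {k : ℕ}

theorem mul_card_add_mod_two_le_ncard (hk : 2 ≤ k) (hG : ∀ v, ∃ w, G.Adj v w)
    {S : Set G.Dart} (hS : IsKTDS (inflation G) k S) :
    k * Fintype.card V + k * Fintype.card V % 2 ≤ S.ncard := by
  have hclique : ∀ v, k ≤ (S ∩ G.dartsFrom v).ncard := fun v => by
    obtain ⟨w, hvw⟩ := hG v
    exact le_ncard_inter_dartsFrom hk hS ⟨(v, w), hvw⟩
  have hsum : ∑ _v : V, k ≤ ∑ v, (S ∩ G.dartsFrom v).ncard :=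
    Finset.sum_le_sum fun v _ => hclique v
  have hconst : ∑ _v : V, k = k * Fintype.card V := by
    rw [Finset.sum_const, Finset.card_univ, smul_eq_mul, mul_comm]
  rw [ncard_eq_sum_ncard_inter_dartsFrom]
  rcases hsum.lt_or_eq with hlt | heq
  · omega
  have hexact : ∀ v, (S ∩ G.dartsFrom v).ncard = k := fun v =>
    ((Finset.sum_eq_sum_iff_of_le fun v _ => hclique v).mp heq v (Finset.mem_univ v)).symm
  have heven := even_ncard_of_symm_mem fun d hd =>
    symm_mem_of_ncard_inter_dartsFrom_le hS hd (hexact d.fst).le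
  rw [ncard_eq_sum_ncard_inter_dartsFrom, ← heq, hconst, Nat.even_iff] at heven
  omega

theorem exists_isKTDS_inflation_of_le {H : SimpleGraph V} (hH : H ≤ G)
    (hdeg : ∀ v, k ≤ (H.neighborSet v).ncard) :
    ∃ S, IsKTDS (inflation G) k S ∧ S.ncard = ∑ v, (H.neighborSet v).ncard := by
  refine ⟨{d | H.Adj d.fst d.snd}, isKTDS_inflation_of_symm_mem (fun d hd => hd.symm) ?_, ?_⟩
  · intro v
    rw [ncard_setOf_adj_inter_dartsFrom hH]
    exact hdeg v
  · rw [ncard_eq_sum_ncard_inter_dartsFrom]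
    exact Finset.sum_congr rfl fun v _ => ncard_setOf_adj_inter_dartsFrom hH v

theorem ktdn_inflation_eq_of_le {H : SimpleGraph V} (hk : 2 ≤ k) (hH : H ≤ G)
    (hdeg : ∀ v, k ≤ (H.neighborSet v).ncard)
    (hsum : ∑ v, (H.neighborSet v).ncard ≤ k * Fintype.card V + k * Fintype.card V % 2) :
    ktdn (inflation G) k = k * Fintype.card V + k * Fintype.card V % 2 := by
  obtain ⟨S, hS, hcard⟩ := exists_isKTDS_inflation_of_le hH hdeg
  have hG : ∀ v, ∃ w, G.Adj v w := fun v => by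
    have := hdeg v
    obtain ⟨w, hw⟩ := Set.nonempty_of_ncard_ne_zero (s := H.neighborSet v) (by omega)
    exact ⟨w, hH hw⟩
  exact le_antisymm ((ktdn_le_ncard hS).trans (hcard ▸ hsum))
    (le_ktdn ⟨S, hS⟩ fun T hT => mul_card_add_mod_two_le_ncard hk hG hT)

end InflationBounds

namespace SimpleGraph

variable {V W A : Type*}

def pairGraph (σ : V → V) : SimpleGraph V :=
  fromRel fun a b => σ a = b

theorem pairGraph_adj {σ : V → V} (hσ : Function.Involutive σ) {a b : V} :
    (pairGraph σ).Adj a b ↔ a ≠ b ∧ b = σ a := by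
  simp only [pairGraph, fromRel_adj, hσ.eq_iff (x := b)]
  grind

theorem ncard_neighborSet_pairGraph [DecidableEq V] {σ : V → V} (hσ : Function.Involutive σ)
    (a : V) : ((pairGraph σ).neighborSet a).ncard = if σ a = a then 0 else 1 := by
  have : (pairGraph σ).neighborSet a = {σ a} \ {a} := by
    ext b
    simp only [mem_neighborSet, pairGraph_adj hσ, Set.mem_sdiff, Set.mem_singleton_iff]
    grind
  split_ifs with h
  · rw [this, h, sdiff_self, Set.bot_eq_empty, Set.ncard_empty]
  · rw [this, Set.sdiff_singleton_eq_self (by simpa using Ne.symm h), Set.ncard_singleton]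

theorem neighborSet_circulantGraph [AddGroup A] {s : Set A} (hs : 0 ∉ s) (a : A) :
    (circulantGraph s).neighborSet a = (· + a) '' (s ∪ -s) := by
  ext b
  rw [Set.image_add_right, mem_neighborSet, circulantGraph_adj]
  simp only [Set.mem_preimage, Set.mem_union, Set.mem_neg, ← sub_eq_add_neg, neg_sub]
  refine ⟨fun h => h.2.symm, fun h => ⟨fun hab => ?_, h.symm⟩⟩
  rw [hab, sub_self] at h
  simp [hs] at h

theorem ncard_neighborSet_circulantGraph [AddGroup A] {s : Set A} (hs : 0 ∉ s) (a : A) :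
    ((circulantGraph s).neighborSet a).ncard = (s ∪ -s).ncard := by
  rw [neighborSet_circulantGraph hs, Set.ncard_image_of_injective _ (add_left_injective a)]

theorem ncard_neighborSet_circulantGraph_sup_pairGraph [AddGroup A] [Finite A] [DecidableEq A]
    {s : Set A} {σ : A → A} (hs : 0 ∉ s) (hσ : Function.Involutive σ)
    (hσs : ∀ a, σ a ≠ a → σ a - a ∉ s ∪ -s) (a : A) :
    ((circulantGraph s ⊔ pairGraph σ).neighborSet a).ncard =
      (s ∪ -s).ncard + if σ a = a then 0 else 1 := by
  rw [neighborSet_sup, Set.ncard_union_eq, ncard_neighborSet_circulantGraph hs,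
    ncard_neighborSet_pairGraph hσ]
  refine Set.disjoint_right.mpr fun b hb hb' => ?_
  obtain ⟨hab, rfl⟩ := (pairGraph_adj hσ).mp hb
  rw [neighborSet_circulantGraph hs, Set.image_add_right] at hb'
  exact hσs a (Ne.symm hab) (by simpa [sub_eq_add_neg] using hb')

theorem ncard_neighborSet_sup_edge [Finite V] [DecidableEq V] {H : SimpleGraph V} {x z : V}
    (hxz : x ≠ z) (hn : ¬ H.Adj x z) (v : V) :
    ((H ⊔ edge x z).neighborSet v).ncard =
      (H.neighborSet v).ncard + if v = x ∨ v = z then 1 else 0 := by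
  rw [neighborSet_sup, Set.ncard_union_eq]
  · congr 1
    split_ifs with h
    · rcases h with rfl | rfl
      · convert Set.ncard_singleton z
        ext w
        simp only [mem_neighborSet, edge_adj, Set.mem_singleton_iff]
        grind
      · convert Set.ncard_singleton x
        ext w
        simp only [mem_neighborSet, edge_adj, Set.mem_singleton_iff]
        grind
    · convert Set.ncard_empty V
      ext w
      simp only [mem_neighborSet, edge_adj, Set.mem_empty_iff_false, iff_false]
      grind
  · refine Set.disjoint_left.mpr fun w hw hw' => ?_
    simp only [mem_neighborSet, edge_adj] at hw hw'
    rcases hw'.1 with ⟨rfl, rfl⟩ | ⟨rfl, rfl⟩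
    · exact hn hw
    · exact hn hw.symm

theorem sum_mono {G G' : SimpleGraph V} {H H' : SimpleGraph W} (hG : G ≤ G') (hH : H ≤ H') :
    G ⊕g H ≤ G' ⊕g H' := by
  rintro (a | a) (b | b) h
  · exact hG h
  · simp at h
  · simp at h
  · exact hH h

theorem ncard_neighborSet_sum_inl (G : SimpleGraph V) (H : SimpleGraph W) (v : V) :
    ((G ⊕g H).neighborSet (Sum.inl v)).ncard = (G.neighborSet v).ncard := by
  have : (G ⊕g H).neighborSet (Sum.inl v) = Sum.inl '' G.neighborSet v := by
    ext (w | w) <;> simp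
  rw [this, Set.ncard_image_of_injective _ Sum.inl_injective]

theorem ncard_neighborSet_sum_inr (G : SimpleGraph V) (H : SimpleGraph W) (w : W) :
    ((G ⊕g H).neighborSet (Sum.inr w)).ncard = (H.neighborSet w).ncard := by
  have : (G ⊕g H).neighborSet (Sum.inr w) = Sum.inr '' H.neighborSet w := by
    ext (v | v) <;> simp
  rw [this, Set.ncard_image_of_injective _ Sum.inr_injective]

end SimpleGraph

theorem joinByEdge_eq_sum_sup_edge {V W : Type*} (G : SimpleGraph V) (H : SimpleGraph W)
    (x : V) (y : W) : joinByEdge G H x y = (G ⊕g H) ⊔ edge (.inl x) (.inr y) := by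
  ext (a | a) (b | b) <;> simp [joinByEdge, edge_adj] <;> grind [Adj.symm, Adj.ne]

namespace Fin

variable {q r : ℕ}

def smallJumps (q r : ℕ) : Set (Fin q) :=
  {o | 1 ≤ o.val ∧ o.val ≤ r}

section NeZero

variable [NeZero q]

theorem zero_notMem_smallJumps : (0 : Fin q) ∉ smallJumps q r := by
  simp [smallJumps]

theorem mem_neg_smallJumps {o : Fin q} : o ∈ -smallJumps q r ↔ o.val ≠ 0 ∧ q ≤ o.val + r := by
  have := o.isLt
  simp only [smallJumps, Set.mem_neg, Set.mem_ofPred_eq, Fin.val_neg, ← Fin.val_eq_zero_iff]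
  split_ifs <;> omega

theorem mem_smallJumps_union_neg {o : Fin q} :
    o ∈ smallJumps q r ∪ -smallJumps q r ↔ o.val ≠ 0 ∧ (o.val ≤ r ∨ q ≤ o.val + r) := by
  rw [Set.mem_union, mem_neg_smallJumps]
  simp only [smallJumps, Set.mem_ofPred_eq]
  omega

theorem ncard_smallJumps_union_neg (h : 2 * r < q) :
    (smallJumps q r ∪ -smallJumps q r).ncard = 2 * r := by
  have hpre : smallJumps q r = Fin.val ⁻¹' ↑(Finset.Icc 1 r) := by
    ext o
    simp [smallJumps]
  have hcard : (smallJumps q r).ncard = r := by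
    rw [hpre, Set.ncard_preimage_of_injective_subset_range Fin.val_injective,
      Set.ncard_coe_finset, Nat.card_Icc, Nat.add_sub_cancel]
    intro v hv
    simp only [Finset.coe_Icc, Set.mem_Icc] at hv
    exact ⟨⟨v, by omega⟩, rfl⟩
  have hdisj : Disjoint (smallJumps q r) (-smallJumps q r) := by
    refine Set.disjoint_left.mpr fun o ho ho' => ?_
    have := mem_neg_smallJumps.mp ho'
    simp only [smallJumps, Set.mem_ofPred_eq] at ho
    omega
  rw [Set.ncard_union_eq hdisj, Set.ncard_neg, hcard, two_mul]

end NeZero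

/-- For odd `q = 2h + 1`: the involution swapping `c` and `c + h` for `1 ≤ c ≤ h`, fixing `0`. -/
def foldPairing (q : ℕ) (c : Fin q) : Fin q :=
  ⟨if c.val = 0 then 0 else if c.val ≤ (q - 1) / 2 then c.val + (q - 1) / 2
    else c.val - (q - 1) / 2, by have := c.isLt; split_ifs <;> omega⟩

theorem foldPairing_involutive (hq : Odd q) : Function.Involutive (foldPairing q) := by
  have := Nat.odd_iff.mp hq
  intro c
  have := c.isLt
  ext
  simp only [foldPairing]
  split_ifs <;> omega

theorem val_foldPairing_eq_val_iff (hq : 3 ≤ q) {c : Fin q} :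
    (foldPairing q c).val = c.val ↔ c.val = 0 := by
  simp only [foldPairing]
  split_ifs <;> omega

theorem val_foldPairing_sub (hq : Odd q) {c : Fin q} (hc : c.val ≠ 0) :
    (foldPairing q c - c).val = (q - 1) / 2 ∨ (foldPairing q c - c).val = (q + 1) / 2 := by
  have := Nat.odd_iff.mp hq
  have := c.isLt
  by_cases hle : c.val ≤ (q - 1) / 2
  · left
    have hle : c ≤ foldPairing q c :=
      Fin.le_def.mpr (by simp only [foldPairing]; split_ifs <;> omega)
    rw [Fin.sub_val_of_le hle]
    simp only [foldPairing]
    split_ifs <;> omega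
  · right
    have hlt : foldPairing q c < c :=
      Fin.lt_def.mpr (by simp only [foldPairing]; split_ifs <;> omega)
    rw [Fin.coe_sub_iff_lt.mpr hlt]
    simp only [foldPairing]
    split_ifs <;> omega

end Fin

open Fin in
theorem exists_regular_fin {q k : ℕ} (hkq : k < q) (heven : Even (k * q)) :
    ∃ H : SimpleGraph (Fin q), ∀ v, (H.neighborSet v).ncard = k := by
  have : NeZero q := ⟨by omega⟩
  rcases Nat.even_or_odd k with ⟨r, rfl⟩ | ⟨r, rfl⟩
  · refine ⟨circulantGraph (smallJumps q r), fun v => ?_⟩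
    rw [ncard_neighborSet_circulantGraph zero_notMem_smallJumps,
      ncard_smallJumps_union_neg (by omega), two_mul]
  -- `k` odd forces `q` even: add the antipodal perfect matching `a ↔ a + q/2`.
  have hq : q % 2 = 0 := by
    have := (Nat.even_mul.mp heven).resolve_left (Nat.not_even_iff_odd.mpr ⟨r, rfl⟩)
    exact Nat.even_iff.mp this
  set m : Fin q := ⟨q / 2, by omega⟩
  have hm : m + m = 0 := by
    ext
    simp only [Fin.val_add, m, Fin.val_zero]
    rw [← Nat.two_mul, Nat.two_mul_div_two_of_even (Nat.even_iff.mpr hq), Nat.mod_self]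
  have hm0 : m ≠ 0 := fun h =>
    absurd (congrArg Fin.val h) (by simp only [m, Fin.val_zero]; omega)
  refine ⟨circulantGraph (smallJumps q r) ⊔ pairGraph (· + m), fun v => ?_⟩
  rw [ncard_neighborSet_circulantGraph_sup_pairGraph zero_notMem_smallJumps,
    ncard_smallJumps_union_neg (by omega), if_neg (by simpa using hm0)]
  · intro a; simp [add_assoc, hm]
  · intro a _
    rw [add_sub_cancel_left, mem_smallJumps_union_neg]
    simp only [m]
    omega

open Fin in
theorem exists_deficient_fin {q k : ℕ} (hk : Odd k) (hq : Odd q) (hkq : k < q) (x : Fin q) :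
    ∃ H : SimpleGraph (Fin q), ∀ v, (H.neighborSet v).ncard + (if v = x then 1 else 0) = k := by
  have : NeZero q := ⟨by omega⟩
  obtain ⟨r, rfl⟩ := hk
  have hq2 := Nat.odd_iff.mp hq
  -- `a ↔ x + foldPairing (a - x)` matches up the vertices other than `x`, using only the
  -- jumps `±(q-1)/2`, which avoid the jumps `±1, …, ±r` of the circulant.
  let σ : Fin q → Fin q := fun a => x + foldPairing q (a - x)
  have hσ : Function.Involutive σ := fun a => by
    simp only [σ, add_sub_cancel_left]
    rw [foldPairing_involutive hq, add_sub_cancel]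
  have hfix : ∀ a, σ a = a ↔ (a - x).val = 0 := fun a => by
    rw [← val_foldPairing_eq_val_iff (by omega), ← Fin.ext_iff, eq_sub_iff_add_eq']
  refine ⟨circulantGraph (smallJumps q r) ⊔ pairGraph σ, fun v => ?_⟩
  rw [ncard_neighborSet_circulantGraph_sup_pairGraph zero_notMem_smallJumps hσ,
    ncard_smallJumps_union_neg (by omega)]
  · have : σ v = v ↔ v = x := by rw [hfix, Fin.val_eq_zero_iff, sub_eq_zero]
    by_cases h : v = x
    · rw [if_pos (this.mpr h), if_pos h, Nat.add_zero]
    · rw [if_neg (mt this.mp h), if_neg h, Nat.add_zero]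
  · intro a ha
    have hsub : σ a - a = foldPairing q (a - x) - (a - x) := by simp only [σ]; abel
    rw [hsub, mem_smallJumps_union_neg]
    have := val_foldPairing_sub hq (mt (hfix a).mpr ha)
    omega

theorem exists_near_regular_fin {q k : ℕ} (hkq : k < q) :
    ∃ H : SimpleGraph (Fin q), (∀ v, k ≤ (H.neighborSet v).ncard) ∧
      ∑ v, (H.neighborSet v).ncard ≤ k * q + k * q % 2 := by
  rcases Nat.even_or_odd (k * q) with heven | hodd
  · obtain ⟨H, hH⟩ := exists_regular_fin hkq heven
    refine ⟨H, fun v => (hH v).ge, ?_⟩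
    simp [hH, mul_comm]
  obtain ⟨hk, hq⟩ := Nat.odd_mul.mp hodd
  have x : Fin q := ⟨0, by omega⟩
  obtain ⟨B, hB⟩ := exists_deficient_fin hk hq hkq x
  -- Repair the deficient vertex `x` by an edge to some `z` outside its closed neighbourhood.
  obtain ⟨z, hz⟩ : ∃ z, z ∉ insert x (B.neighborSet x) := by
    by_contra! h
    have hle := Set.ncard_le_ncard (s := Set.univ) (fun z _ => h z)
    rw [Set.ncard_univ, Nat.card_eq_fintype_card, Fintype.card_fin] at hle
    have := hle.trans (Set.ncard_insert_le x (B.neighborSet x))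
    have := hB x
    simp only [if_true] at this
    omega
  rw [Set.mem_insert_iff, not_or, mem_neighborSet] at hz
  have hdeg := ncard_neighborSet_sup_edge (Ne.symm hz.1) hz.2
  refine ⟨B ⊔ edge x z, fun v => ?_, ?_⟩
  · have := hB v
    rw [hdeg]
    split_ifs at * <;> omega
  · calc ∑ v, ((B ⊔ edge x z).neighborSet v).ncard ≤ ∑ v, (k + if v = z then 1 else 0) := by
          refine Finset.sum_le_sum fun v _ => ?_
          have := hB v
          rw [hdeg]
          split_ifs at * <;> omega
      _ = k * q + k * q % 2 := by
          rw [Finset.sum_add_distrib, Finset.sum_ite_eq' Finset.univ z,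
            if_pos (Finset.mem_univ z), Finset.sum_const, Finset.card_univ, Fintype.card_fin,
            smul_eq_mul, mul_comm, Nat.odd_iff.mp hodd]

theorem ktdn_inflation_top {q k : ℕ} (hk : 2 ≤ k) (hkq : k < q) :
    ktdn (inflation (⊤ : SimpleGraph (Fin q))) k = k * q + k * q % 2 := by
  obtain ⟨H, hdeg, hsum⟩ := exists_near_regular_fin hkq
  simpa using ktdn_inflation_eq_of_le hk le_top hdeg (by simpa using hsum)

theorem exists_regular_le_joinByEdge_top {n m k : ℕ} (hk : Odd k) (hn : Odd n) (hm : Odd m)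
    (hkn : k < n) (hkm : k < m) (x : Fin n) (y : Fin m) :
    ∃ H ≤ joinByEdge (⊤ : SimpleGraph (Fin n)) (⊤ : SimpleGraph (Fin m)) x y,
      ∀ v, (H.neighborSet v).ncard = k := by
  -- Both halves are deficient exactly at the ends of the cut-edge, which repairs them.
  obtain ⟨HL, hL⟩ := exists_deficient_fin hk hn hkn x
  obtain ⟨HR, hR⟩ := exists_deficient_fin hk hm hkm y
  refine ⟨(HL ⊕g HR) ⊔ edge (.inl x) (.inr y), ?_, ?_⟩
  · rw [joinByEdge_eq_sum_sup_edge]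
    exact sup_le_sup_right (sum_mono le_top le_top) _
  · rintro (a | b) <;>
      rw [ncard_neighborSet_sup_edge Sum.inl_ne_inr (not_adj_sum_inl_inr _ _)]
    · simpa [ncard_neighborSet_sum_inl] using hL a
    · simpa [ncard_neighborSet_sum_inr] using hR b

theorem ktdn_inflation_joinByEdge_top {n m k : ℕ} (hk : 2 ≤ k) (hkn : k < n) (hkm : k < m)
    (x : Fin n) (y : Fin m) :
    ktdn (inflation (joinByEdge (⊤ : SimpleGraph (Fin n)) (⊤ : SimpleGraph (Fin m)) x y)) k =
      k * (n + m) + k * (n + m) % 2 := by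
  have hcard : Fintype.card (Fin n ⊕ Fin m) = n + m := by simp
  rw [← hcard]
  by_cases hodd : Odd (k * n) ∧ Odd (k * m)
  · obtain ⟨hk', hn⟩ := Nat.odd_mul.mp hodd.1
    obtain ⟨H, hH, hdeg⟩ :=
      exists_regular_le_joinByEdge_top hk' hn (Nat.odd_mul.mp hodd.2).2 hkn hkm x y
    refine ktdn_inflation_eq_of_le hk hH (fun v => (hdeg v).ge) ?_
    rw [Finset.sum_congr rfl fun v _ => hdeg v, Finset.sum_const, Finset.card_univ, smul_eq_mul,
      mul_comm]
    exact Nat.le_add_right _ _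
  obtain ⟨HL, hLdeg, hLsum⟩ := exists_near_regular_fin hkn
  obtain ⟨HR, hRdeg, hRsum⟩ := exists_near_regular_fin hkm
  have hle : HL ⊕g HR ≤ joinByEdge (⊤ : SimpleGraph (Fin n)) (⊤ : SimpleGraph (Fin m)) x y := by
    rw [joinByEdge_eq_sum_sup_edge]
    exact le_sup_of_le_left (sum_mono le_top le_top)
  refine ktdn_inflation_eq_of_le hk hle ?_ ?_
  · rintro (a | b)
    · simpa [ncard_neighborSet_sum_inl] using hLdeg a
    · simpa [ncard_neighborSet_sum_inr] using hRdeg b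
  · rw [Fintype.sum_sum_type, hcard]
    simp only [ncard_neighborSet_sum_inl, ncard_neighborSet_sum_inr]
    rw [Nat.odd_iff, Nat.odd_iff] at hodd
    rw [Nat.mul_add]
    omega

/-- **Corollary (sharpness of the cut-edge bounds for complete graphs).** Let
`2 ≤ k < n ≤ m` and let `F` be obtained from the disjoint union of `G = K_n` and `H = K_m`
by adding a cut-edge. Then `γ_{×k,t}(F_I) = γ_{×k,t}(G_I) + γ_{×k,t}(H_I) - 2` if `k`, `m`
and `n` are all odd, and `γ_{×k,t}(F_I) = γ_{×k,t}(G_I) + γ_{×k,t}(H_I)` otherwise. -/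
theorem stmt12 (n m k : ℕ) (hk : 2 ≤ k) (hkn : k < n) (hnm : n ≤ m)
    (x : Fin n) (y : Fin m) :
    (Odd k ∧ Odd m ∧ Odd n →
      ktdn (inflation (joinByEdge (⊤ : SimpleGraph (Fin n)) (⊤ : SimpleGraph (Fin m)) x y)) k
          + 2
        = ktdn (inflation (⊤ : SimpleGraph (Fin n))) k
          + ktdn (inflation (⊤ : SimpleGraph (Fin m))) k) ∧
    (¬ (Odd k ∧ Odd m ∧ Odd n) →
      ktdn (inflation (joinByEdge (⊤ : SimpleGraph (Fin n)) (⊤ : SimpleGraph (Fin m)) x y)) k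
        = ktdn (inflation (⊤ : SimpleGraph (Fin n))) k
          + ktdn (inflation (⊤ : SimpleGraph (Fin m))) k) := by
  have hkm : k < m := hkn.trans_le hnm
  rw [ktdn_inflation_joinByEdge_top hk hkn hkm, ktdn_inflation_top hk hkn,
    ktdn_inflation_top hk hkm, Nat.mul_add]
  have hkn2 : k * n % 2 = 1 ↔ Odd k ∧ Odd n := by rw [← Nat.odd_iff, Nat.odd_mul]
  have hkm2 : k * m % 2 = 1 ↔ Odd k ∧ Odd m := by rw [← Nat.odd_iff, Nat.odd_mul]
  constructor
  · rintro ⟨hk', hm', hn'⟩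
    have := hkn2.mpr ⟨hk', hn'⟩
    have := hkm2.mpr ⟨hk', hm'⟩
    omega
  · intro hodd
    have : ¬ (k * n % 2 = 1 ∧ k * m % 2 = 1) := fun h =>
      hodd ⟨(hkn2.mp h.1).1, (hkm2.mp h.2).2, (hkn2.mp h.1).2⟩
    omega
end
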